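/- arXiv:2207.10954 — 12 statements merged into one kernel-verified Lean document; each statement's English description precedes it below -/
import Mathlib

section
/- Let A be an associative algebra, M an A-bimodule, and R : M → A a relative Rota-Baxter operator, i.e., R(m)·R(m') = R(R(m)·_M m' + m·_M R(m')) for all m, m' ∈ M. Then the operations m ≺ m' := m·_M R(m') and m ≻ m' := R(m)·_M m' make M into a dendriform algebra, i.e., they satisfy (x≺y)≺z = x≺(y≺z+y≻z), (x≻y)≺z = x≻(y≺z), and (x≺y+x≻y)≻z = x≻(y≻z). -/
theorem dendriform_of_relative_rota_baxter_general
    {K : Type*} [Field K] {A M : Type*}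
    [AddCommGroup A] [Module K A] [AddCommGroup M] [Module K M]
    -- associative algebra structure on A
    (mul : A →ₗ[K] A →ₗ[K] A)
    -- A-bimodule structure on M
    (al : A →ₗ[K] M →ₗ[K] M) (ar : M →ₗ[K] A →ₗ[K] M)
    (hal : ∀ (a b : A) (m : M), al (mul a b) m = al a (al b m))
    (halr : ∀ (a : A) (m : M) (b : A), ar (al a m) b = al a (ar m b))
    (har : ∀ (m : M) (a b : A), ar (ar m a) b = ar m (mul a b))
    -- relative Rota-Baxter operator
    (R : M →ₗ[K] A)
    (hR : ∀ m m' : M, mul (R m) (R m') = R (al (R m) m' + ar m (R m'))) :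
    -- dendriform axioms for x ≺ y := ar x (R y), x ≻ y := al (R x) y
    (∀ x y z : M, ar (ar x (R y)) (R z) = ar x (R (ar y (R z) + al (R y) z))) ∧
    (∀ x y z : M, ar (al (R x) y) (R z) = al (R x) (ar y (R z))) ∧
    (∀ x y z : M, al (R (ar x (R y) + al (R x) y)) z = al (R x) (al (R y) z)) := by
  refine ⟨fun x y z => ?_, fun x y z => halr _ _ _, fun x y z => ?_⟩
  · rw [har, hR, add_comm]
  · rw [add_comm, ← hR, hal]

/-- A relative Rota-Baxter operator induces a dendriform algebra structure on the bimodule. -/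
theorem dendriform_of_relative_rota_baxter
    {K : Type*} [Field K] {A M : Type*}
    [AddCommGroup A] [Module K A] [AddCommGroup M] [Module K M]
    -- associative algebra structure on A
    (mul : A →ₗ[K] A →ₗ[K] A)
    (hmul : ∀ a b c : A, mul (mul a b) c = mul a (mul b c))
    -- A-bimodule structure on M
    (al : A →ₗ[K] M →ₗ[K] M) (ar : M →ₗ[K] A →ₗ[K] M)
    (hal : ∀ (a b : A) (m : M), al (mul a b) m = al a (al b m))
    (halr : ∀ (a : A) (m : M) (b : A), ar (al a m) b = al a (ar m b))
    (har : ∀ (m : M) (a b : A), ar (ar m a) b = ar m (mul a b))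
    -- relative Rota-Baxter operator
    (R : M →ₗ[K] A)
    (hR : ∀ m m' : M, mul (R m) (R m') = R (al (R m) m' + ar m (R m'))) :
    -- dendriform axioms for x ≺ y := ar x (R y), x ≻ y := al (R x) y
    (∀ x y z : M, ar (ar x (R y)) (R z) = ar x (R (ar y (R z) + al (R y) z))) ∧
    (∀ x y z : M, ar (al (R x) y) (R z) = al (R x) (ar y (R z))) ∧
    (∀ x y z : M, al (R (ar x (R y) + al (R x) y)) z = al (R x) (al (R y) z)) :=
  dendriform_of_relative_rota_baxter_general mul al ar hal halr har R hR
end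

section
/- Let A be an associative algebra and M an A-bimodule. A linear map R : M → A is a relative Rota-Baxter operator if and only if the map R̂ : A ⊕ M → A ⊕ M defined by R̂(a, m) = (R(m), 0) is a Rota-Baxter operator on the semidirect product algebra A ⊕ M, whose multiplication is (a,m)·(a',m') = (a·a', a·_M m' + m·_M a'). -/
section SemidirectLift

variable {K : Type*} [CommSemiring K] {A M : Type*}
    [AddCommMonoid A] [Module K A] [AddCommMonoid M] [Module K M]
    {mul : A →ₗ[K] A →ₗ[K] A} {al : A →ₗ[K] M →ₗ[K] M} {ar : M →ₗ[K] A →ₗ[K] M}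
    {R : M →ₗ[K] A} {muls : A × M → A × M → A × M} {Rhat : A × M → A × M}

-- Both sides of the identity on the left have zero `M`-component.
theorem lift_rotaBaxter_identity_iff
    (hmuls : ∀ p q : A × M, muls p q = (mul p.1 q.1, al p.1 q.2 + ar p.2 q.1))
    (hRhat : ∀ p : A × M, Rhat p = (R p.2, 0)) (p q : A × M) :
    muls (Rhat p) (Rhat q) = Rhat (muls (Rhat p) q + muls p (Rhat q))
      ↔ mul (R p.2) (R q.2) = R (al (R p.2) q.2 + ar p.2 (R q.2)) := by
  simp only [hmuls, hRhat, map_zero, LinearMap.zero_apply, add_zero, zero_add,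
    Prod.snd_add, Prod.mk.injEq, and_true]

end SemidirectLift

theorem relative_rota_baxter_iff_lift_rota_baxter_general
    {K : Type*} [Field K] {A M : Type*}
    [AddCommGroup A] [Module K A] [AddCommGroup M] [Module K M]
    (mul : A →ₗ[K] A →ₗ[K] A)
    (al : A →ₗ[K] M →ₗ[K] M) (ar : M →ₗ[K] A →ₗ[K] M)
    (R : M →ₗ[K] A)
    -- semidirect product multiplication on A × M
    (muls : A × M → A × M → A × M)
    (hmuls : ∀ p q : A × M, muls p q = (mul p.1 q.1, al p.1 q.2 + ar p.2 q.1))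
    -- the lift R̂
    (Rhat : A × M → A × M)
    (hRhat : ∀ p : A × M, Rhat p = (R p.2, 0)) :
    (∀ m m' : M, mul (R m) (R m') = R (al (R m) m' + ar m (R m')))
      ↔ (∀ p q : A × M, muls (Rhat p) (Rhat q)
            = Rhat (muls (Rhat p) q + muls p (Rhat q))) :=
  ⟨fun h p q => (lift_rotaBaxter_identity_iff hmuls hRhat p q).2 (h p.2 q.2),
    fun h m m' => (lift_rotaBaxter_identity_iff hmuls hRhat (0, m) (0, m')).1 (h _ _)⟩

/-- R : M → A is a relative Rota-Baxter operator iff R̂(a,m) = (R m, 0) is a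
Rota-Baxter operator on the semidirect product algebra A ⊕ M. -/
theorem relative_rota_baxter_iff_lift_rota_baxter
    {K : Type*} [Field K] {A M : Type*}
    [AddCommGroup A] [Module K A] [AddCommGroup M] [Module K M]
    (mul : A →ₗ[K] A →ₗ[K] A)
    (hmul : ∀ a b c : A, mul (mul a b) c = mul a (mul b c))
    (al : A →ₗ[K] M →ₗ[K] M) (ar : M →ₗ[K] A →ₗ[K] M)
    (hal : ∀ (a b : A) (m : M), al (mul a b) m = al a (al b m))
    (halr : ∀ (a : A) (m : M) (b : A), ar (al a m) b = al a (ar m b))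
    (har : ∀ (m : M) (a b : A), ar (ar m a) b = ar m (mul a b))
    (R : M →ₗ[K] A)
    -- semidirect product multiplication on A × M
    (muls : A × M → A × M → A × M)
    (hmuls : ∀ p q : A × M, muls p q = (mul p.1 q.1, al p.1 q.2 + ar p.2 q.1))
    -- the lift R̂
    (Rhat : A × M → A × M)
    (hRhat : ∀ p : A × M, Rhat p = (R p.2, 0)) :
    (∀ m m' : M, mul (R m) (R m') = R (al (R m) m' + ar m (R m')))
      ↔ (∀ p q : A × M, muls (Rhat p) (Rhat q)
            = Rhat (muls (Rhat p) q + muls p (Rhat q))) :=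
  relative_rota_baxter_iff_lift_rota_baxter_general mul al ar R muls hmuls Rhat hRhat
end

section
/- Let A be an associative algebra and r = Σ r₍₁₎ ⊗ r₍₂₎ ∈ A ⊗ A be a solution of the associative Yang-Baxter equation r₁₃r₁₂ − r₁₂r₂₃ + r₂₃r₁₃ = 0. Then the map R : A → A defined by R(a) = Σ r₍₁₎ · a · r₍₂₎ is a Rota-Baxter operator on A, i.e., R(a)·R(a') = R(R(a)·a' + a·R(a')) for all a, a' ∈ A. -/
/-!
Apply to the Yang-Baxter equation the linear map `x ⊗ y ⊗ z ↦ x a y a' z`. By associativity the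
three resulting double sums are `R(R(a) a')`, `R(a) R(a')` and `R(a R(a'))`, so the equation
becomes `R(R(a) a') - R(a) R(a') + R(a R(a')) = 0`.
-/

open TensorProduct

namespace AssociativeYangBaxter

section Semiring

variable {K A : Type*} [CommSemiring K] [AddCommMonoid A] [Module K A]
  (mul : A →ₗ[K] A →ₗ[K] A)

local infixr:70 " ∗ " => mul

def interleave (a a' : A) : A ⊗[K] (A ⊗[K] A) →ₗ[K] A :=
  lift (uncurry (RingHom.id K) A A A ∘ₗ (mul ∘ₗ mul.flip a).compr₂ (mul ∘ₗ mul.flip a'))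

def sandwich {ι : Type*} [Fintype ι] (u v : ι → A) (a : A) : A :=
  ∑ i, (u i ∗ a) ∗ v i

variable {mul}

theorem interleave_tmul (hmul : ∀ a b c : A, (a ∗ b) ∗ c = a ∗ b ∗ c) (a a' x y z : A) :
    interleave mul a a' (x ⊗ₜ (y ⊗ₜ z)) = x ∗ a ∗ y ∗ a' ∗ z := by
  simp [interleave, uncurry_apply, hmul]

variable {ι : Type*} [Fintype ι] {u v : ι → A}

theorem sandwich_add (a a' : A) :
    sandwich mul u v (a + a') = sandwich mul u v a + sandwich mul u v a' := by
  simp only [sandwich, map_add, LinearMap.add_apply, Finset.sum_add_distrib]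

theorem sandwich_mul_sandwich (hmul : ∀ a b c : A, (a ∗ b) ∗ c = a ∗ b ∗ c) (a a' : A) :
    sandwich mul u v a ∗ sandwich mul u v a' = ∑ i, ∑ j, u i ∗ a ∗ v i ∗ u j ∗ a' ∗ v j := by
  simp only [sandwich, map_sum, LinearMap.sum_apply, hmul]
  exact Finset.sum_comm

theorem sandwich_of_sandwich_mul (hmul : ∀ a b c : A, (a ∗ b) ∗ c = a ∗ b ∗ c) (a a' : A) :
    sandwich mul u v (sandwich mul u v a ∗ a') = ∑ i, ∑ j, u i ∗ u j ∗ a ∗ v j ∗ a' ∗ v i := by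
  simp only [sandwich, map_sum, LinearMap.sum_apply, hmul]

theorem sandwich_of_mul_sandwich (hmul : ∀ a b c : A, (a ∗ b) ∗ c = a ∗ b ∗ c) (a a' : A) :
    sandwich mul u v (a ∗ sandwich mul u v a') = ∑ i, ∑ j, u i ∗ a ∗ u j ∗ a' ∗ v j ∗ v i := by
  simp only [sandwich, map_sum, LinearMap.sum_apply, hmul]

end Semiring

section Ring

variable {K A : Type*} [CommRing K] [AddCommGroup A] [Module K A] (mul : A →ₗ[K] A →ₗ[K] A)

local infixr:70 " ∗ " => mul

/-- `r₁₃r₁₂ − r₁₂r₂₃ + r₂₃r₁₃ = 0` for `r = ∑ i, u i ⊗ v i`. -/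
def IsAYBESolution {ι : Type*} [Fintype ι] (u v : ι → A) : Prop :=
  (∑ i, ∑ j, (u i ∗ u j) ⊗ₜ[K] (v j ⊗ₜ[K] v i)) - (∑ i, ∑ j, u i ⊗ₜ[K] ((v i ∗ u j) ⊗ₜ[K] v j))
    + (∑ i, ∑ j, u i ⊗ₜ[K] (u j ⊗ₜ[K] (v j ∗ v i))) = 0

def IsRotaBaxter (R : A → A) : Prop :=
  ∀ a a', R a ∗ R a' = R (R a ∗ a' + a ∗ R a')

variable {mul} {ι : Type*} [Fintype ι] {u v : ι → A}

theorem IsAYBESolution.interleave_eq_zero (hmul : ∀ a b c : A, (a ∗ b) ∗ c = a ∗ b ∗ c)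
    (h : IsAYBESolution mul u v) (a a' : A) :
    (∑ i, ∑ j, u i ∗ u j ∗ a ∗ v j ∗ a' ∗ v i) - (∑ i, ∑ j, u i ∗ a ∗ v i ∗ u j ∗ a' ∗ v j)
      + (∑ i, ∑ j, u i ∗ a ∗ u j ∗ a' ∗ v j ∗ v i) = 0 := by
  simpa [map_sum, interleave_tmul hmul, hmul] using congrArg (interleave mul a a') h

theorem IsAYBESolution.isRotaBaxter_sandwich (hmul : ∀ a b c : A, (a ∗ b) ∗ c = a ∗ b ∗ c)
    (h : IsAYBESolution mul u v) : IsRotaBaxter mul (sandwich mul u v) := by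
  intro a a'
  rw [sandwich_add, sandwich_mul_sandwich hmul, sandwich_of_sandwich_mul hmul,
    sandwich_of_mul_sandwich hmul, eq_comm, ← sub_eq_zero, ← h.interleave_eq_zero hmul a a']
  abel

end Ring

end AssociativeYangBaxter

/-- A solution r = Σᵢ uᵢ ⊗ vᵢ of the associative Yang-Baxter equation gives rise to a
Rota-Baxter operator R(a) = Σᵢ uᵢ · a · vᵢ. -/
theorem rota_baxter_of_aybe
    {K : Type*} [Field K] {A : Type*} [AddCommGroup A] [Module K A]
    (mul : A →ₗ[K] A →ₗ[K] A)
    (hmul : ∀ a b c : A, mul (mul a b) c = mul a (mul b c))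
    {ι : Type*} [Fintype ι] (u v : ι → A)
    -- the associative Yang-Baxter equation r₁₃r₁₂ − r₁₂r₂₃ + r₂₃r₁₃ = 0 in A ⊗ A ⊗ A
    (haybe :
      (∑ i : ι, ∑ j : ι, (mul (u i) (u j)) ⊗ₜ[K] ((v j) ⊗ₜ[K] (v i)))
        - (∑ i : ι, ∑ j : ι, (u i) ⊗ₜ[K] ((mul (v i) (u j)) ⊗ₜ[K] (v j)))
        + (∑ i : ι, ∑ j : ι, (u i) ⊗ₜ[K] ((u j) ⊗ₜ[K] (mul (v j) (v i))))
        = (0 : A ⊗[K] (A ⊗[K] A)))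
    (R : A → A)
    (hRdef : ∀ a : A, R a = ∑ i : ι, mul (mul (u i) a) (v i)) :
    ∀ a a' : A, mul (R a) (R a') = R (mul (R a) a' + mul a (R a')) := by
  obtain rfl : R = AssociativeYangBaxter.sandwich mul u v := funext hRdef
  exact AssociativeYangBaxter.IsAYBESolution.isRotaBaxter_sandwich hmul haybe
end

section
/- Let A be an associative algebra, r ∈ A ⊗ A an associative r-matrix (solution of the AYBE), and M an A-bimodule. Define R : A → A by R(a) = Σ r₍₁₎·a·r₍₂₎ and R_M : M → M by R_M(m) = Σ r₍₁₎·_M m·_M r₍₂₎. Then (M, R_M) is a Rota-Baxter bimodule over the Rota-Baxter algebra (A, R): R(a)·_M R_M(m) = R_M(R(a)·_M m + a·_M R_M(m)) and R_M(m)·_M R(a) = R_M(R_M(m)·_M a + m·_M R(a)) for all a ∈ A, m ∈ M. -/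
/-!
Both identities are images of the associative Yang-Baxter equation in `A ⊗ A ⊗ A` under a
trilinear map `A × A × A → M`: `(x, y, z) ↦ x a y m z` for the left action and
`(x, y, z) ↦ x m y a z` for the right one. Once every product is reassociated to a normal form
with the bimodule axioms, the three resulting double sums are exactly the terms of the two sides.
-/

open TensorProduct

section

variable {K A N ι : Type*} [CommRing K] [AddCommGroup A] [Module K A]
  [AddCommGroup N] [Module K N] [Fintype ι]

/-- `r = ∑ i, u i ⊗ v i` satisfies `r₁₃r₁₂ − r₁₂r₂₃ + r₂₃r₁₃ = 0`. -/
def IsAYBESolution (mul : A →ₗ[K] A →ₗ[K] A) (u v : ι → A) : Prop :=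
  (∑ i : ι, ∑ j : ι, (mul (u i) (u j)) ⊗ₜ[K] ((v j) ⊗ₜ[K] (v i)))
    - (∑ i : ι, ∑ j : ι, (u i) ⊗ₜ[K] ((mul (v i) (u j)) ⊗ₜ[K] (v j)))
    + (∑ i : ι, ∑ j : ι, (u i) ⊗ₜ[K] ((u j) ⊗ₜ[K] (mul (v j) (v i))))
    = (0 : A ⊗[K] (A ⊗[K] A))

theorem IsAYBESolution.sum_trilinear {mul : A →ₗ[K] A →ₗ[K] A} {u v : ι → A}
    (h : IsAYBESolution mul u v) (T : A →ₗ[K] A →ₗ[K] A →ₗ[K] N) :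
    ∑ i, ∑ j, T (mul (u i) (u j)) (v j) (v i) + ∑ i, ∑ j, T (u i) (u j) (mul (v j) (v i)) =
      ∑ i, ∑ j, T (u i) (mul (v i) (u j)) (v j) := by
  have hT := congrArg (lift (uncurry (.id K) A A N ∘ₗ T)) h
  simp only [map_add, map_sub, map_sum, lift.tmul, LinearMap.comp_apply, uncurry_apply,
    map_zero] at hT
  rwa [sub_add_eq_add_sub, sub_eq_zero] at hT

def sandwich {X Y : Type*} [AddCommGroup X] [Module K X] [AddCommGroup Y] [Module K Y]
    (f : A →ₗ[K] X →ₗ[K] Y) (g : Y →ₗ[K] A →ₗ[K] N) (u v : ι → A) (x : X) : N :=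
  ∑ i, g (f (u i) x) (v i)

variable {M : Type*} [AddCommGroup M] [Module K M]
  {mul : A →ₗ[K] A →ₗ[K] A} {al : A →ₗ[K] M →ₗ[K] M} {ar : M →ₗ[K] A →ₗ[K] M} {u v : ι → A}

theorem IsAYBESolution.al_sandwich_sandwich
    (hmul : ∀ a b c : A, mul (mul a b) c = mul a (mul b c))
    (hal : ∀ (a b : A) (m : M), al (mul a b) m = al a (al b m))
    (halr : ∀ (a : A) (m : M) (b : A), ar (al a m) b = al a (ar m b))
    (har : ∀ (m : M) (a b : A), ar (ar m a) b = ar m (mul a b))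
    (h : IsAYBESolution mul u v) (a : A) (m : M) :
    al (sandwich mul mul u v a) (sandwich al ar u v m) =
      sandwich al ar u v (al (sandwich mul mul u v a) m + al a (sandwich al ar u v m)) := by
  let T : A →ₗ[K] A →ₗ[K] A →ₗ[K] M :=
    LinearMap.mk₂ K (fun x y => al x ∘ₗ al a ∘ₗ al y ∘ₗ ar m)
      (by intros; ext; simp) (by intros; ext; simp) (by intros; ext; simp) (by intros; ext; simp)
  have hT := h.sum_trilinear T
  simp only [T, LinearMap.mk₂_apply, LinearMap.comp_apply, hal] at hT
  simp only [sandwich, map_add, map_sum, LinearMap.sum_apply, LinearMap.add_apply,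
    Finset.sum_add_distrib, hmul, hal, halr, har]
  rw [Finset.sum_comm]
  exact hT.symm

theorem IsAYBESolution.ar_sandwich_sandwich
    (hmul : ∀ a b c : A, mul (mul a b) c = mul a (mul b c))
    (hal : ∀ (a b : A) (m : M), al (mul a b) m = al a (al b m))
    (halr : ∀ (a : A) (m : M) (b : A), ar (al a m) b = al a (ar m b))
    (har : ∀ (m : M) (a b : A), ar (ar m a) b = ar m (mul a b))
    (h : IsAYBESolution mul u v) (m : M) (a : A) :
    ar (sandwich al ar u v m) (sandwich mul mul u v a) =
      sandwich al ar u v (ar (sandwich al ar u v m) a + ar m (sandwich mul mul u v a)) := by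
  let T : A →ₗ[K] A →ₗ[K] A →ₗ[K] M :=
    LinearMap.mk₂ K (fun x y => al x ∘ₗ ar m ∘ₗ mul y ∘ₗ mul a)
      (by intros; ext; simp) (by intros; ext; simp) (by intros; ext; simp) (by intros; ext; simp)
  have hT := h.sum_trilinear T
  simp only [T, LinearMap.mk₂_apply, LinearMap.comp_apply, hmul, hal] at hT
  simp only [sandwich, map_add, map_sum, LinearMap.sum_apply, LinearMap.add_apply,
    Finset.sum_add_distrib, hmul, halr, har]
  rw [Finset.sum_comm]
  exact hT.symm

end

/-- For an associative r-matrix r = Σᵢ uᵢ ⊗ vᵢ and an A-bimodule M, the pair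
(M, R_M) with R_M(m) = Σᵢ uᵢ ·_M m ·_M vᵢ is a Rota-Baxter bimodule over the
Rota-Baxter algebra (A, R), R(a) = Σᵢ uᵢ · a · vᵢ. -/
theorem rota_baxter_bimodule_of_aybe
    {K : Type*} [Field K] {A M : Type*}
    [AddCommGroup A] [Module K A] [AddCommGroup M] [Module K M]
    (mul : A →ₗ[K] A →ₗ[K] A)
    (hmul : ∀ a b c : A, mul (mul a b) c = mul a (mul b c))
    (al : A →ₗ[K] M →ₗ[K] M) (ar : M →ₗ[K] A →ₗ[K] M)
    (hal : ∀ (a b : A) (m : M), al (mul a b) m = al a (al b m))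
    (halr : ∀ (a : A) (m : M) (b : A), ar (al a m) b = al a (ar m b))
    (har : ∀ (m : M) (a b : A), ar (ar m a) b = ar m (mul a b))
    {ι : Type*} [Fintype ι] (u v : ι → A)
    -- the associative Yang-Baxter equation r₁₃r₁₂ − r₁₂r₂₃ + r₂₃r₁₃ = 0 in A ⊗ A ⊗ A
    (haybe :
      (∑ i : ι, ∑ j : ι, (mul (u i) (u j)) ⊗ₜ[K] ((v j) ⊗ₜ[K] (v i)))
        - (∑ i : ι, ∑ j : ι, (u i) ⊗ₜ[K] ((mul (v i) (u j)) ⊗ₜ[K] (v j)))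
        + (∑ i : ι, ∑ j : ι, (u i) ⊗ₜ[K] ((u j) ⊗ₜ[K] (mul (v j) (v i))))
        = (0 : A ⊗[K] (A ⊗[K] A)))
    (R : A → A) (hRdef : ∀ a : A, R a = ∑ i : ι, mul (mul (u i) a) (v i))
    (RM : M → M) (hRMdef : ∀ m : M, RM m = ∑ i : ι, ar (al (u i) m) (v i)) :
    (∀ (a : A) (m : M), al (R a) (RM m) = RM (al (R a) m + al a (RM m))) ∧
    (∀ (m : M) (a : A), ar (RM m) (R a) = RM (ar (RM m) a + ar m (R a))) := by
  obtain rfl : R = sandwich mul mul u v := funext hRdef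
  obtain rfl : RM = sandwich al ar u v := funext hRMdef
  exact ⟨IsAYBESolution.al_sandwich_sandwich hmul hal halr har haybe,
    IsAYBESolution.ar_sandwich_sandwich hmul hal halr har haybe⟩
end

section
/- Let M →^R A be a relative Rota-Baxter algebra and (N →^S B, l, r) a bimodule over it. Then B* →^{−S*} N* is a bimodule over M →^R A, where N* and B* carry the dual A-bimodule structures, and the structure maps l* : M ⊗ N* → B* and r* : N* ⊗ M → B* are given by l*(m, f)(b) = f(r(b, m)) and r*(f, m)(b) = f(l(m, b)). -/
/-!
The dual actions on `N*` and `B*` are transposes of the actions on `N` and `B`, and `l*`, `r*`,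
`-S*` are transposes as well. Transposition reverses composition, so every axiom of a bimodule
over `M →ᴿ A` for `B* → N*` is the transpose of an axiom for `N → B`, with left and right
exchanged. The sign of `-S*` is what makes the two compatibilities with `R` come out right.
-/

open LinearMap Module

theorem neg_dual_comp_eq_of_comp_eq {K U V : Type*} [CommRing K] [AddCommGroup U] [Module K U]
    [AddCommGroup V] [Module K V] {S : U →ₗ[K] V} {ρ : U →ₗ[K] U} {β : V →ₗ[K] V}
    {τ : V →ₗ[K] U} (h : ∀ u, β (S u) = S (ρ u + τ (S u))) (g : Dual K V) :
    -(g ∘ₗ S) ∘ₗ ρ = -((-(g ∘ₗ S)) ∘ₗ τ + g ∘ₗ β) ∘ₗ S := by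
  ext u
  simp only [comp_apply, LinearMap.neg_apply, LinearMap.add_apply, h, map_add]
  ring

theorem dual_bimodule {K A V : Type*} [CommRing K] [AddCommGroup V] [Module K V]
    {mul : A → A → A} {lact : A → V →ₗ[K] V} {ract : A → V →ₗ[K] V}
    (hl : ∀ a a' v, lact (mul a a') v = lact a (lact a' v))
    (hlr : ∀ a v a', ract a' (lact a v) = lact a (ract a' v))
    (hr : ∀ v a a', ract a' (ract a v) = ract (mul a a') v) :
    (∀ a a' (f : Dual K V), f ∘ₗ ract (mul a a') = (f ∘ₗ ract a') ∘ₗ ract a) ∧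
    (∀ a (f : Dual K V) a', (f ∘ₗ ract a) ∘ₗ lact a' = (f ∘ₗ lact a') ∘ₗ ract a) ∧
    (∀ (f : Dual K V) a a', (f ∘ₗ lact a) ∘ₗ lact a' = f ∘ₗ lact (mul a a')) := by
  simp only [comp_assoc]
  exact ⟨fun a a' f => congrArg f.comp (ext fun v => (hr v a a').symm),
    fun a f a' => congrArg f.comp (ext fun v => hlr a' v a),
    fun f a a' => congrArg f.comp (ext fun v => (hl a a' v).symm)⟩

theorem dual_bimodule_of_relative_rota_baxter_general
    {K : Type*} [Field K] {A M B N : Type*}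
    [AddCommGroup A] [Module K A] [AddCommGroup M] [Module K M]
    [AddCommGroup B] [Module K B] [AddCommGroup N] [Module K N]
    -- relative Rota-Baxter algebra M → A
    (mul : A →ₗ[K] A →ₗ[K] A)
    (al : A →ₗ[K] M →ₗ[K] M) (ar : M →ₗ[K] A →ₗ[K] M)
    (R : M →ₗ[K] A)
    -- bimodule (N →ˢ B, l, r)
    (S : N →ₗ[K] B)
    (bl : A →ₗ[K] B →ₗ[K] B) (br : B →ₗ[K] A →ₗ[K] B)
    (hbl : ∀ (a a' : A) (b : B), bl (mul a a') b = bl a (bl a' b))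
    (hblr : ∀ (a : A) (b : B) (a' : A), br (bl a b) a' = bl a (br b a'))
    (hbr : ∀ (b : B) (a a' : A), br (br b a) a' = br b (mul a a'))
    (nl : A →ₗ[K] N →ₗ[K] N) (nr : N →ₗ[K] A →ₗ[K] N)
    (hnl : ∀ (a a' : A) (n : N), nl (mul a a') n = nl a (nl a' n))
    (hnlr : ∀ (a : A) (n : N) (a' : A), nr (nl a n) a' = nl a (nr n a'))
    (hnr : ∀ (n : N) (a a' : A), nr (nr n a) a' = nr n (mul a a'))
    (l : M →ₗ[K] B →ₗ[K] N) (r : B →ₗ[K] M →ₗ[K] N)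
    (hl1 : ∀ (a : A) (m : M) (b : B), l (al a m) b = nl a (l m b))
    (hl2 : ∀ (m : M) (a : A) (b : B), l (ar m a) b = l m (bl a b))
    (hl3 : ∀ (m : M) (b : B) (a : A), l m (br b a) = nr (l m b) a)
    (hr1 : ∀ (a : A) (b : B) (m : M), r (bl a b) m = nl a (r b m))
    (hr2 : ∀ (b : B) (a : A) (m : M), r (br b a) m = r b (al a m))
    (hr3 : ∀ (b : B) (m : M) (a : A), r b (ar m a) = nr (r b m) a)
    (hrs : ∀ (m : M) (n : N), bl (R m) (S n) = S (nl (R m) n + l m (S n)))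
    (hsr : ∀ (n : N) (m : M), br (S n) (R m) = S (r (S n) m + nr n (R m)))
    -- the dual structure maps
    (blD : A → Module.Dual K N → Module.Dual K N)
    (hblD : ∀ a f, blD a f = f ∘ₗ nr.flip a)
    (brD : Module.Dual K N → A → Module.Dual K N)
    (hbrD : ∀ f a, brD f a = f ∘ₗ nl a)
    (nlD : A → Module.Dual K B → Module.Dual K B)
    (hnlD : ∀ a g, nlD a g = g ∘ₗ br.flip a)
    (nrD : Module.Dual K B → A → Module.Dual K B)
    (hnrD : ∀ g a, nrD g a = g ∘ₗ bl a)
    (SD : Module.Dual K B → Module.Dual K N)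
    (hSD : ∀ g, SD g = -(g ∘ₗ S))
    (lD : M → Module.Dual K N → Module.Dual K B)
    (hlD : ∀ m f, lD m f = f ∘ₗ r.flip m)
    (rD : Module.Dual K N → M → Module.Dual K B)
    (hrD : ∀ f m, rD f m = f ∘ₗ l m) :
    -- N* is an A-bimodule
    (∀ (a a' : A) (f : Module.Dual K N), blD (mul a a') f = blD a (blD a' f)) ∧
    (∀ (a : A) (f : Module.Dual K N) (a' : A), brD (blD a f) a' = blD a (brD f a')) ∧
    (∀ (f : Module.Dual K N) (a a' : A), brD (brD f a) a' = brD f (mul a a')) ∧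
    -- B* is an A-bimodule
    (∀ (a a' : A) (g : Module.Dual K B), nlD (mul a a') g = nlD a (nlD a' g)) ∧
    (∀ (a : A) (g : Module.Dual K B) (a' : A), nrD (nlD a g) a' = nlD a (nrD g a')) ∧
    (∀ (g : Module.Dual K B) (a a' : A), nrD (nrD g a) a' = nrD g (mul a a')) ∧
    -- the conditions on l* and r*
    (∀ (a : A) (m : M) (f : Module.Dual K N), lD (al a m) f = nlD a (lD m f)) ∧
    (∀ (m : M) (a : A) (f : Module.Dual K N), lD (ar m a) f = lD m (blD a f)) ∧
    (∀ (m : M) (f : Module.Dual K N) (a : A), lD m (brD f a) = nrD (lD m f) a) ∧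
    (∀ (a : A) (f : Module.Dual K N) (m : M), rD (blD a f) m = nlD a (rD f m)) ∧
    (∀ (f : Module.Dual K N) (a : A) (m : M), rD (brD f a) m = rD f (al a m)) ∧
    (∀ (f : Module.Dual K N) (m : M) (a : A), rD f (ar m a) = nrD (rD f m) a) ∧
    -- compatibility with R and −S*
    (∀ (m : M) (g : Module.Dual K B), blD (R m) (SD g) = SD (nlD (R m) g + lD m (SD g))) ∧
    (∀ (g : Module.Dual K B) (m : M), brD (SD g) (R m) = SD (rD (SD g) m + nrD g (R m))) := by
  simp only [hblD, hbrD, hnlD, hnrD, hSD, hlD, hrD]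
  obtain ⟨hN₁, hN₂, hN₃⟩ := dual_bimodule (lact := nl) (ract := nr.flip) hnl hnlr hnr
  obtain ⟨hB₁, hB₂, hB₃⟩ := dual_bimodule (lact := bl) (ract := br.flip) hbl hblr hbr
  refine ⟨hN₁, hN₂, hN₃, hB₁, hB₂, hB₃, ?_, ?_, ?_, ?_, ?_, ?_, ?_, ?_⟩
  any_goals simp only [comp_assoc]
  · exact fun a m f => congrArg f.comp (ext fun b => (hr2 b a m).symm)
  · exact fun m a f => congrArg f.comp (ext fun b => hr3 b m a)
  · exact fun m f a => congrArg f.comp (ext fun b => (hr1 a b m).symm)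
  · exact fun a f m => congrArg f.comp (ext fun b => (hl3 m b a).symm)
  · exact fun f a m => congrArg f.comp (ext fun b => (hl1 a m b).symm)
  · exact fun f m a => congrArg f.comp (ext fun b => hl2 m a b)
  · intro m g
    rw [add_comm (g ∘ₗ br.flip (R m))]
    exact neg_dual_comp_eq_of_comp_eq (fun n => by rw [add_comm]; exact hsr n m) g
  · exact fun g m => neg_dual_comp_eq_of_comp_eq (hrs m) g

/-- Dual bimodule: if (N →ˢ B, l, r) is a bimodule over the relative Rota-Baxter
algebra M →ᴿ A, then (B* →^{-S*} N*, l*, r*) is again a bimodule over M →ᴿ A. -/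
theorem dual_bimodule_of_relative_rota_baxter
    {K : Type*} [Field K] {A M B N : Type*}
    [AddCommGroup A] [Module K A] [AddCommGroup M] [Module K M]
    [AddCommGroup B] [Module K B] [AddCommGroup N] [Module K N]
    -- relative Rota-Baxter algebra M → A
    (mul : A →ₗ[K] A →ₗ[K] A)
    (hmul : ∀ a b c : A, mul (mul a b) c = mul a (mul b c))
    (al : A →ₗ[K] M →ₗ[K] M) (ar : M →ₗ[K] A →ₗ[K] M)
    (hal : ∀ (a b : A) (m : M), al (mul a b) m = al a (al b m))
    (halr : ∀ (a : A) (m : M) (b : A), ar (al a m) b = al a (ar m b))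
    (har : ∀ (m : M) (a b : A), ar (ar m a) b = ar m (mul a b))
    (R : M →ₗ[K] A)
    (hR : ∀ m m' : M, mul (R m) (R m') = R (al (R m) m' + ar m (R m')))
    -- bimodule (N →ˢ B, l, r)
    (S : N →ₗ[K] B)
    (bl : A →ₗ[K] B →ₗ[K] B) (br : B →ₗ[K] A →ₗ[K] B)
    (hbl : ∀ (a a' : A) (b : B), bl (mul a a') b = bl a (bl a' b))
    (hblr : ∀ (a : A) (b : B) (a' : A), br (bl a b) a' = bl a (br b a'))
    (hbr : ∀ (b : B) (a a' : A), br (br b a) a' = br b (mul a a'))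
    (nl : A →ₗ[K] N →ₗ[K] N) (nr : N →ₗ[K] A →ₗ[K] N)
    (hnl : ∀ (a a' : A) (n : N), nl (mul a a') n = nl a (nl a' n))
    (hnlr : ∀ (a : A) (n : N) (a' : A), nr (nl a n) a' = nl a (nr n a'))
    (hnr : ∀ (n : N) (a a' : A), nr (nr n a) a' = nr n (mul a a'))
    (l : M →ₗ[K] B →ₗ[K] N) (r : B →ₗ[K] M →ₗ[K] N)
    (hl1 : ∀ (a : A) (m : M) (b : B), l (al a m) b = nl a (l m b))
    (hl2 : ∀ (m : M) (a : A) (b : B), l (ar m a) b = l m (bl a b))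
    (hl3 : ∀ (m : M) (b : B) (a : A), l m (br b a) = nr (l m b) a)
    (hr1 : ∀ (a : A) (b : B) (m : M), r (bl a b) m = nl a (r b m))
    (hr2 : ∀ (b : B) (a : A) (m : M), r (br b a) m = r b (al a m))
    (hr3 : ∀ (b : B) (m : M) (a : A), r b (ar m a) = nr (r b m) a)
    (hrs : ∀ (m : M) (n : N), bl (R m) (S n) = S (nl (R m) n + l m (S n)))
    (hsr : ∀ (n : N) (m : M), br (S n) (R m) = S (r (S n) m + nr n (R m)))
    -- the dual structure maps
    (blD : A → Module.Dual K N → Module.Dual K N)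
    (hblD : ∀ a f, blD a f = f ∘ₗ nr.flip a)
    (brD : Module.Dual K N → A → Module.Dual K N)
    (hbrD : ∀ f a, brD f a = f ∘ₗ nl a)
    (nlD : A → Module.Dual K B → Module.Dual K B)
    (hnlD : ∀ a g, nlD a g = g ∘ₗ br.flip a)
    (nrD : Module.Dual K B → A → Module.Dual K B)
    (hnrD : ∀ g a, nrD g a = g ∘ₗ bl a)
    (SD : Module.Dual K B → Module.Dual K N)
    (hSD : ∀ g, SD g = -(g ∘ₗ S))
    (lD : M → Module.Dual K N → Module.Dual K B)
    (hlD : ∀ m f, lD m f = f ∘ₗ r.flip m)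
    (rD : Module.Dual K N → M → Module.Dual K B)
    (hrD : ∀ f m, rD f m = f ∘ₗ l m) :
    -- N* is an A-bimodule
    (∀ (a a' : A) (f : Module.Dual K N), blD (mul a a') f = blD a (blD a' f)) ∧
    (∀ (a : A) (f : Module.Dual K N) (a' : A), brD (blD a f) a' = blD a (brD f a')) ∧
    (∀ (f : Module.Dual K N) (a a' : A), brD (brD f a) a' = brD f (mul a a')) ∧
    -- B* is an A-bimodule
    (∀ (a a' : A) (g : Module.Dual K B), nlD (mul a a') g = nlD a (nlD a' g)) ∧
    (∀ (a : A) (g : Module.Dual K B) (a' : A), nrD (nlD a g) a' = nlD a (nrD g a')) ∧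
    (∀ (g : Module.Dual K B) (a a' : A), nrD (nrD g a) a' = nrD g (mul a a')) ∧
    -- the conditions on l* and r*
    (∀ (a : A) (m : M) (f : Module.Dual K N), lD (al a m) f = nlD a (lD m f)) ∧
    (∀ (m : M) (a : A) (f : Module.Dual K N), lD (ar m a) f = lD m (blD a f)) ∧
    (∀ (m : M) (f : Module.Dual K N) (a : A), lD m (brD f a) = nrD (lD m f) a) ∧
    (∀ (a : A) (f : Module.Dual K N) (m : M), rD (blD a f) m = nlD a (rD f m)) ∧
    (∀ (f : Module.Dual K N) (a : A) (m : M), rD (brD f a) m = rD f (al a m)) ∧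
    (∀ (f : Module.Dual K N) (m : M) (a : A), rD f (ar m a) = nrD (rD f m) a) ∧
    -- compatibility with R and −S*
    (∀ (m : M) (g : Module.Dual K B), blD (R m) (SD g) = SD (nlD (R m) g + lD m (SD g))) ∧
    (∀ (g : Module.Dual K B) (m : M), brD (SD g) (R m) = SD (rD (SD g) m + nrD g (R m))) :=
  dual_bimodule_of_relative_rota_baxter_general mul al ar R S bl br hbl hblr hbr nl nr hnl hnlr hnr
    l r hl1 hl2 hl3 hr1 hr2 hr3 hrs hsr blD hblD brD hbrD nlD hnlD nrD hnrD SD hSD lD hlD rD hrD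
end

section
/- Let M →^R A be a relative Rota-Baxter algebra and N →^S B a 2-term chain complex with B and N both A-bimodules, together with maps l : M ⊗ B → N and r : B ⊗ M → N satisfying the compatibility conditions (bimod-l) and (bimod-r). Then B ⊕ N is an (A ⊕ M)-bimodule (over the semidirect product algebra A ⊕ M) with actions (a,m)·(b,n) = (a·_B b, a·_N n + l(m,b)) and (b,n)·(a,m) = (b·_B a, r(b,m) + n·_N a). -/
/-!
Each component of the three bimodule identities for `B × N` splits into a bimodule axiom of `B`
or `N` over `A` and, in the `N`-component, the cross terms involving `M`; these cross terms
match pairwise by exactly one of (bimod-l) and (bimod-r).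
-/

namespace LiftedBimodule

variable {K A M B N : Type*} [CommSemiring K]
  [AddCommMonoid A] [Module K A] [AddCommMonoid M] [Module K M]
  [AddCommMonoid B] [Module K B] [AddCommMonoid N] [Module K N]

def semidirectMul (mul : A →ₗ[K] A →ₗ[K] A) (al : A →ₗ[K] M →ₗ[K] M)
    (ar : M →ₗ[K] A →ₗ[K] M) (p q : A × M) : A × M :=
  (mul p.1 q.1, al p.1 q.2 + ar p.2 q.1)

def actLeft (bl : A →ₗ[K] B →ₗ[K] B) (nl : A →ₗ[K] N →ₗ[K] N) (l : M →ₗ[K] B →ₗ[K] N)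
    (p : A × M) (w : B × N) : B × N :=
  (bl p.1 w.1, nl p.1 w.2 + l p.2 w.1)

def actRight (br : B →ₗ[K] A →ₗ[K] B) (nr : N →ₗ[K] A →ₗ[K] N) (r : B →ₗ[K] M →ₗ[K] N)
    (w : B × N) (p : A × M) : B × N :=
  (br w.1 p.1, r w.1 p.2 + nr w.2 p.1)

theorem actLeft_semidirectMul {mul : A →ₗ[K] A →ₗ[K] A} {al : A →ₗ[K] M →ₗ[K] M}
    {ar : M →ₗ[K] A →ₗ[K] M} {bl : A →ₗ[K] B →ₗ[K] B} {nl : A →ₗ[K] N →ₗ[K] N}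
    {l : M →ₗ[K] B →ₗ[K] N}
    (hbl : ∀ (a a' : A) (b : B), bl (mul a a') b = bl a (bl a' b))
    (hnl : ∀ (a a' : A) (n : N), nl (mul a a') n = nl a (nl a' n))
    (hl1 : ∀ (a : A) (m : M) (b : B), l (al a m) b = nl a (l m b))
    (hl2 : ∀ (m : M) (a : A) (b : B), l (ar m a) b = l m (bl a b))
    (p q : A × M) (w : B × N) :
    actLeft bl nl l (semidirectMul mul al ar p q) w =
      actLeft bl nl l p (actLeft bl nl l q w) := by
  refine Prod.ext (hbl _ _ _) ?_
  simp only [actLeft, semidirectMul, map_add, LinearMap.add_apply, hnl, hl1, hl2]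
  abel

theorem actRight_actLeft {bl : A →ₗ[K] B →ₗ[K] B} {br : B →ₗ[K] A →ₗ[K] B}
    {nl : A →ₗ[K] N →ₗ[K] N} {nr : N →ₗ[K] A →ₗ[K] N}
    {l : M →ₗ[K] B →ₗ[K] N} {r : B →ₗ[K] M →ₗ[K] N}
    (hblr : ∀ (a : A) (b : B) (a' : A), br (bl a b) a' = bl a (br b a'))
    (hnlr : ∀ (a : A) (n : N) (a' : A), nr (nl a n) a' = nl a (nr n a'))
    (hl3 : ∀ (m : M) (b : B) (a : A), l m (br b a) = nr (l m b) a)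
    (hr1 : ∀ (a : A) (b : B) (m : M), r (bl a b) m = nl a (r b m))
    (p : A × M) (w : B × N) (q : A × M) :
    actRight br nr r (actLeft bl nl l p w) q = actLeft bl nl l p (actRight br nr r w q) := by
  refine Prod.ext (hblr _ _ _) ?_
  simp only [actLeft, actRight, map_add, LinearMap.add_apply, hnlr, hl3, hr1]
  abel

theorem actRight_semidirectMul {mul : A →ₗ[K] A →ₗ[K] A} {al : A →ₗ[K] M →ₗ[K] M}
    {ar : M →ₗ[K] A →ₗ[K] M} {br : B →ₗ[K] A →ₗ[K] B} {nr : N →ₗ[K] A →ₗ[K] N}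
    {r : B →ₗ[K] M →ₗ[K] N}
    (hbr : ∀ (b : B) (a a' : A), br (br b a) a' = br b (mul a a'))
    (hnr : ∀ (n : N) (a a' : A), nr (nr n a) a' = nr n (mul a a'))
    (hr2 : ∀ (b : B) (a : A) (m : M), r (br b a) m = r b (al a m))
    (hr3 : ∀ (b : B) (m : M) (a : A), r b (ar m a) = nr (r b m) a)
    (w : B × N) (p q : A × M) :
    actRight br nr r (actRight br nr r w p) q =
      actRight br nr r w (semidirectMul mul al ar p q) := by
  refine Prod.ext (hbr _ _ _) ?_
  simp only [actRight, semidirectMul, map_add, LinearMap.add_apply, hnr, hr2, hr3]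
  abel

end LiftedBimodule

open LiftedBimodule in
theorem lifted_bimodule_over_semidirect_product_general
    {K : Type*} [Field K] {A M B N : Type*}
    [AddCommGroup A] [Module K A] [AddCommGroup M] [Module K M]
    [AddCommGroup B] [Module K B] [AddCommGroup N] [Module K N]
    (mul : A →ₗ[K] A →ₗ[K] A)
    (al : A →ₗ[K] M →ₗ[K] M) (ar : M →ₗ[K] A →ₗ[K] M)
    (bl : A →ₗ[K] B →ₗ[K] B) (br : B →ₗ[K] A →ₗ[K] B)
    (hbl : ∀ (a a' : A) (b : B), bl (mul a a') b = bl a (bl a' b))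
    (hblr : ∀ (a : A) (b : B) (a' : A), br (bl a b) a' = bl a (br b a'))
    (hbr : ∀ (b : B) (a a' : A), br (br b a) a' = br b (mul a a'))
    (nl : A →ₗ[K] N →ₗ[K] N) (nr : N →ₗ[K] A →ₗ[K] N)
    (hnl : ∀ (a a' : A) (n : N), nl (mul a a') n = nl a (nl a' n))
    (hnlr : ∀ (a : A) (n : N) (a' : A), nr (nl a n) a' = nl a (nr n a'))
    (hnr : ∀ (n : N) (a a' : A), nr (nr n a) a' = nr n (mul a a'))
    (l : M →ₗ[K] B →ₗ[K] N) (r : B →ₗ[K] M →ₗ[K] N)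
    (hl1 : ∀ (a : A) (m : M) (b : B), l (al a m) b = nl a (l m b))
    (hl2 : ∀ (m : M) (a : A) (b : B), l (ar m a) b = l m (bl a b))
    (hl3 : ∀ (m : M) (b : B) (a : A), l m (br b a) = nr (l m b) a)
    (hr1 : ∀ (a : A) (b : B) (m : M), r (bl a b) m = nl a (r b m))
    (hr2 : ∀ (b : B) (a : A) (m : M), r (br b a) m = r b (al a m))
    (hr3 : ∀ (b : B) (m : M) (a : A), r b (ar m a) = nr (r b m) a)
    -- semidirect product multiplication on A × M and actions on B × N
    (muls : A × M → A × M → A × M)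
    (hmuls : ∀ p q, muls p q = (mul p.1 q.1, al p.1 q.2 + ar p.2 q.1))
    (actl : A × M → B × N → B × N)
    (hactl : ∀ p w, actl p w = (bl p.1 w.1, nl p.1 w.2 + l p.2 w.1))
    (actr : B × N → A × M → B × N)
    (hactr : ∀ w p, actr w p = (br w.1 p.1, r w.1 p.2 + nr w.2 p.1)) :
    (∀ (p q : A × M) (w : B × N), actl (muls p q) w = actl p (actl q w)) ∧
    (∀ (p : A × M) (w : B × N) (q : A × M), actr (actl p w) q = actl p (actr w q)) ∧
    (∀ (w : B × N) (p q : A × M), actr (actr w p) q = actr w (muls p q)) := by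
  obtain rfl : muls = semidirectMul mul al ar := funext₂ hmuls
  obtain rfl : actl = actLeft bl nl l := funext₂ hactl
  obtain rfl : actr = actRight br nr r := funext₂ hactr
  exact ⟨actLeft_semidirectMul hbl hnl hl1 hl2, actRight_actLeft hblr hnlr hl3 hr1,
    actRight_semidirectMul hbr hnr hr2 hr3⟩

/-- Lifted bimodule: B ⊕ N is a bimodule over the semidirect product algebra A ⊕ M. -/
theorem lifted_bimodule_over_semidirect_product
    {K : Type*} [Field K] {A M B N : Type*}
    [AddCommGroup A] [Module K A] [AddCommGroup M] [Module K M]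
    [AddCommGroup B] [Module K B] [AddCommGroup N] [Module K N]
    (mul : A →ₗ[K] A →ₗ[K] A)
    (hmul : ∀ a b c : A, mul (mul a b) c = mul a (mul b c))
    (al : A →ₗ[K] M →ₗ[K] M) (ar : M →ₗ[K] A →ₗ[K] M)
    (hal : ∀ (a b : A) (m : M), al (mul a b) m = al a (al b m))
    (halr : ∀ (a : A) (m : M) (b : A), ar (al a m) b = al a (ar m b))
    (har : ∀ (m : M) (a b : A), ar (ar m a) b = ar m (mul a b))
    (R : M →ₗ[K] A)
    (hR : ∀ m m' : M, mul (R m) (R m') = R (al (R m) m' + ar m (R m')))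
    (S : N →ₗ[K] B)
    (bl : A →ₗ[K] B →ₗ[K] B) (br : B →ₗ[K] A →ₗ[K] B)
    (hbl : ∀ (a a' : A) (b : B), bl (mul a a') b = bl a (bl a' b))
    (hblr : ∀ (a : A) (b : B) (a' : A), br (bl a b) a' = bl a (br b a'))
    (hbr : ∀ (b : B) (a a' : A), br (br b a) a' = br b (mul a a'))
    (nl : A →ₗ[K] N →ₗ[K] N) (nr : N →ₗ[K] A →ₗ[K] N)
    (hnl : ∀ (a a' : A) (n : N), nl (mul a a') n = nl a (nl a' n))
    (hnlr : ∀ (a : A) (n : N) (a' : A), nr (nl a n) a' = nl a (nr n a'))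
    (hnr : ∀ (n : N) (a a' : A), nr (nr n a) a' = nr n (mul a a'))
    (l : M →ₗ[K] B →ₗ[K] N) (r : B →ₗ[K] M →ₗ[K] N)
    (hl1 : ∀ (a : A) (m : M) (b : B), l (al a m) b = nl a (l m b))
    (hl2 : ∀ (m : M) (a : A) (b : B), l (ar m a) b = l m (bl a b))
    (hl3 : ∀ (m : M) (b : B) (a : A), l m (br b a) = nr (l m b) a)
    (hr1 : ∀ (a : A) (b : B) (m : M), r (bl a b) m = nl a (r b m))
    (hr2 : ∀ (b : B) (a : A) (m : M), r (br b a) m = r b (al a m))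
    (hr3 : ∀ (b : B) (m : M) (a : A), r b (ar m a) = nr (r b m) a)
    -- semidirect product multiplication on A × M and actions on B × N
    (muls : A × M → A × M → A × M)
    (hmuls : ∀ p q, muls p q = (mul p.1 q.1, al p.1 q.2 + ar p.2 q.1))
    (actl : A × M → B × N → B × N)
    (hactl : ∀ p w, actl p w = (bl p.1 w.1, nl p.1 w.2 + l p.2 w.1))
    (actr : B × N → A × M → B × N)
    (hactr : ∀ w p, actr w p = (br w.1 p.1, r w.1 p.2 + nr w.2 p.1)) :
    (∀ (p q : A × M) (w : B × N), actl (muls p q) w = actl p (actl q w)) ∧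
    (∀ (p : A × M) (w : B × N) (q : A × M), actr (actl p w) q = actl p (actr w q)) ∧
    (∀ (w : B × N) (p q : A × M), actr (actr w p) q = actr w (muls p q)) :=
  lifted_bimodule_over_semidirect_product_general mul al ar bl br hbl hblr hbr nl nr hnl hnlr hnr l
    r hl1 hl2 hl3 hr1 hr2 hr3 muls hmuls actl hactl actr hactr
end

section
/- Let M →^R A be a relative Rota-Baxter algebra and (N →^S B, l, r) a bimodule over it. Give A ⊕ B the semidirect product algebra structure (a,b)·(a',b') = (a·a', a·_B b' + b·_B a'). Then M ⊕ N is an (A ⊕ B)-bimodule with actions (a,b)▷(m,n) = (a·_M m, a·_N n + r(b,m)) and (m,n)◁(a,b) = (m·_M a, l(m,b) + n·_N a). -/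
/-!
Both sides of each bimodule axiom on `M × N` agree componentwise: the `M`-component is the
corresponding axiom of the `A`-bimodule `M`, and after expanding by bilinearity the `N`-component
splits into three terms, matched by the corresponding axiom of the `A`-bimodule `N` and by two of
the compatibility conditions between `l`, `r` and the actions on `M`, `B`, `N`.
-/

section SemidirectProduct

variable {K A B M N : Type*} [CommSemiring K]
  [AddCommMonoid A] [Module K A] [AddCommMonoid B] [Module K B]
  [AddCommMonoid M] [Module K M] [AddCommMonoid N] [Module K N]

def semidirectMul (mul : A →ₗ[K] A →ₗ[K] A) (bl : A →ₗ[K] B →ₗ[K] B) (br : B →ₗ[K] A →ₗ[K] B)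
    (p q : A × B) : A × B :=
  (mul p.1 q.1, bl p.1 q.2 + br p.2 q.1)

def semidirectLeftAct (al : A →ₗ[K] M →ₗ[K] M) (nl : A →ₗ[K] N →ₗ[K] N)
    (r : B →ₗ[K] M →ₗ[K] N) (p : A × B) (w : M × N) : M × N :=
  (al p.1 w.1, nl p.1 w.2 + r p.2 w.1)

def semidirectRightAct (ar : M →ₗ[K] A →ₗ[K] M) (nr : N →ₗ[K] A →ₗ[K] N)
    (l : M →ₗ[K] B →ₗ[K] N) (w : M × N) (p : A × B) : M × N :=
  (ar w.1 p.1, l w.1 p.2 + nr w.2 p.1)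

variable {mul : A →ₗ[K] A →ₗ[K] A} {bl : A →ₗ[K] B →ₗ[K] B} {br : B →ₗ[K] A →ₗ[K] B}
  {al : A →ₗ[K] M →ₗ[K] M} {ar : M →ₗ[K] A →ₗ[K] M}
  {nl : A →ₗ[K] N →ₗ[K] N} {nr : N →ₗ[K] A →ₗ[K] N}
  {l : M →ₗ[K] B →ₗ[K] N} {r : B →ₗ[K] M →ₗ[K] N}

theorem semidirectLeftAct_semidirectMul
    (hal : ∀ (a b : A) (m : M), al (mul a b) m = al a (al b m))
    (hnl : ∀ (a a' : A) (n : N), nl (mul a a') n = nl a (nl a' n))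
    (hr1 : ∀ (a : A) (b : B) (m : M), r (bl a b) m = nl a (r b m))
    (hr2 : ∀ (b : B) (a : A) (m : M), r (br b a) m = r b (al a m))
    (p q : A × B) (w : M × N) :
    semidirectLeftAct al nl r (semidirectMul mul bl br p q) w =
      semidirectLeftAct al nl r p (semidirectLeftAct al nl r q w) := by
  simp only [semidirectLeftAct, semidirectMul, map_add, LinearMap.add_apply, hal, hnl, hr1, hr2]
  rw [add_assoc]

theorem semidirectRightAct_semidirectLeftAct
    (halr : ∀ (a : A) (m : M) (b : A), ar (al a m) b = al a (ar m b))
    (hnlr : ∀ (a : A) (n : N) (a' : A), nr (nl a n) a' = nl a (nr n a'))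
    (hl1 : ∀ (a : A) (m : M) (b : B), l (al a m) b = nl a (l m b))
    (hr3 : ∀ (b : B) (m : M) (a : A), r b (ar m a) = nr (r b m) a)
    (p : A × B) (w : M × N) (q : A × B) :
    semidirectRightAct ar nr l (semidirectLeftAct al nl r p w) q =
      semidirectLeftAct al nl r p (semidirectRightAct ar nr l w q) := by
  simp only [semidirectLeftAct, semidirectRightAct, map_add, LinearMap.add_apply, halr, hnlr,
    hl1, hr3, Prod.mk.injEq, true_and]
  abel

theorem semidirectRightAct_semidirectRightAct
    (har : ∀ (m : M) (a b : A), ar (ar m a) b = ar m (mul a b))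
    (hnr : ∀ (n : N) (a a' : A), nr (nr n a) a' = nr n (mul a a'))
    (hl2 : ∀ (m : M) (a : A) (b : B), l (ar m a) b = l m (bl a b))
    (hl3 : ∀ (m : M) (b : B) (a : A), l m (br b a) = nr (l m b) a)
    (w : M × N) (p q : A × B) :
    semidirectRightAct ar nr l (semidirectRightAct ar nr l w p) q =
      semidirectRightAct ar nr l w (semidirectMul mul bl br p q) := by
  simp only [semidirectRightAct, semidirectMul, map_add, LinearMap.add_apply, har, hnr, hl2, hl3,
    Prod.mk.injEq, true_and]
  abel

end SemidirectProduct

theorem semidirect_bimodule_MN_over_AB_general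
    {K : Type*} [Field K] {A M B N : Type*}
    [AddCommGroup A] [Module K A] [AddCommGroup M] [Module K M]
    [AddCommGroup B] [Module K B] [AddCommGroup N] [Module K N]
    (mul : A →ₗ[K] A →ₗ[K] A)
    (al : A →ₗ[K] M →ₗ[K] M) (ar : M →ₗ[K] A →ₗ[K] M)
    (hal : ∀ (a b : A) (m : M), al (mul a b) m = al a (al b m))
    (halr : ∀ (a : A) (m : M) (b : A), ar (al a m) b = al a (ar m b))
    (har : ∀ (m : M) (a b : A), ar (ar m a) b = ar m (mul a b))
    (bl : A →ₗ[K] B →ₗ[K] B) (br : B →ₗ[K] A →ₗ[K] B)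
    (nl : A →ₗ[K] N →ₗ[K] N) (nr : N →ₗ[K] A →ₗ[K] N)
    (hnl : ∀ (a a' : A) (n : N), nl (mul a a') n = nl a (nl a' n))
    (hnlr : ∀ (a : A) (n : N) (a' : A), nr (nl a n) a' = nl a (nr n a'))
    (hnr : ∀ (n : N) (a a' : A), nr (nr n a) a' = nr n (mul a a'))
    (l : M →ₗ[K] B →ₗ[K] N) (r : B →ₗ[K] M →ₗ[K] N)
    (hl1 : ∀ (a : A) (m : M) (b : B), l (al a m) b = nl a (l m b))
    (hl2 : ∀ (m : M) (a : A) (b : B), l (ar m a) b = l m (bl a b))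
    (hl3 : ∀ (m : M) (b : B) (a : A), l m (br b a) = nr (l m b) a)
    (hr1 : ∀ (a : A) (b : B) (m : M), r (bl a b) m = nl a (r b m))
    (hr2 : ∀ (b : B) (a : A) (m : M), r (br b a) m = r b (al a m))
    (hr3 : ∀ (b : B) (m : M) (a : A), r b (ar m a) = nr (r b m) a)
    -- semidirect product multiplication on A × B and actions on M × N
    (mulAB : A × B → A × B → A × B)
    (hmulAB : ∀ p q : A × B, mulAB p q = (mul p.1 q.1, bl p.1 q.2 + br p.2 q.1))
    (tl : A × B → M × N → M × N)
    (htl : ∀ (q : A × B) (w : M × N), tl q w = (al q.1 w.1, nl q.1 w.2 + r q.2 w.1))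
    (tr : M × N → A × B → M × N)
    (htr : ∀ (w : M × N) (q : A × B), tr w q = (ar w.1 q.1, l w.1 q.2 + nr w.2 q.1)) :
    (∀ (p q : A × B) (w : M × N), tl (mulAB p q) w = tl p (tl q w)) ∧
    (∀ (p : A × B) (w : M × N) (q : A × B), tr (tl p w) q = tl p (tr w q)) ∧
    (∀ (w : M × N) (p q : A × B), tr (tr w p) q = tr w (mulAB p q)) := by
  obtain rfl : mulAB = semidirectMul mul bl br := funext₂ hmulAB
  obtain rfl : tl = semidirectLeftAct al nl r := funext₂ htl
  obtain rfl : tr = semidirectRightAct ar nr l := funext₂ htr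
  exact ⟨semidirectLeftAct_semidirectMul hal hnl hr1 hr2,
    semidirectRightAct_semidirectLeftAct halr hnlr hl1 hr3,
    semidirectRightAct_semidirectRightAct har hnr hl2 hl3⟩

/-- M ⊕ N is a bimodule over the semidirect product algebra A ⊕ B. -/
theorem semidirect_bimodule_MN_over_AB
    {K : Type*} [Field K] {A M B N : Type*}
    [AddCommGroup A] [Module K A] [AddCommGroup M] [Module K M]
    [AddCommGroup B] [Module K B] [AddCommGroup N] [Module K N]
    (mul : A →ₗ[K] A →ₗ[K] A)
    (hmul : ∀ a b c : A, mul (mul a b) c = mul a (mul b c))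
    (al : A →ₗ[K] M →ₗ[K] M) (ar : M →ₗ[K] A →ₗ[K] M)
    (hal : ∀ (a b : A) (m : M), al (mul a b) m = al a (al b m))
    (halr : ∀ (a : A) (m : M) (b : A), ar (al a m) b = al a (ar m b))
    (har : ∀ (m : M) (a b : A), ar (ar m a) b = ar m (mul a b))
    (R : M →ₗ[K] A)
    (hR : ∀ m m' : M, mul (R m) (R m') = R (al (R m) m' + ar m (R m')))
    (S : N →ₗ[K] B)
    (bl : A →ₗ[K] B →ₗ[K] B) (br : B →ₗ[K] A →ₗ[K] B)
    (hbl : ∀ (a a' : A) (b : B), bl (mul a a') b = bl a (bl a' b))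
    (hblr : ∀ (a : A) (b : B) (a' : A), br (bl a b) a' = bl a (br b a'))
    (hbr : ∀ (b : B) (a a' : A), br (br b a) a' = br b (mul a a'))
    (nl : A →ₗ[K] N →ₗ[K] N) (nr : N →ₗ[K] A →ₗ[K] N)
    (hnl : ∀ (a a' : A) (n : N), nl (mul a a') n = nl a (nl a' n))
    (hnlr : ∀ (a : A) (n : N) (a' : A), nr (nl a n) a' = nl a (nr n a'))
    (hnr : ∀ (n : N) (a a' : A), nr (nr n a) a' = nr n (mul a a'))
    (l : M →ₗ[K] B →ₗ[K] N) (r : B →ₗ[K] M →ₗ[K] N)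
    (hl1 : ∀ (a : A) (m : M) (b : B), l (al a m) b = nl a (l m b))
    (hl2 : ∀ (m : M) (a : A) (b : B), l (ar m a) b = l m (bl a b))
    (hl3 : ∀ (m : M) (b : B) (a : A), l m (br b a) = nr (l m b) a)
    (hr1 : ∀ (a : A) (b : B) (m : M), r (bl a b) m = nl a (r b m))
    (hr2 : ∀ (b : B) (a : A) (m : M), r (br b a) m = r b (al a m))
    (hr3 : ∀ (b : B) (m : M) (a : A), r b (ar m a) = nr (r b m) a)
    (hrs : ∀ (m : M) (n : N), bl (R m) (S n) = S (nl (R m) n + l m (S n)))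
    (hsr : ∀ (n : N) (m : M), br (S n) (R m) = S (r (S n) m + nr n (R m)))
    -- semidirect product multiplication on A × B and actions on M × N
    (mulAB : A × B → A × B → A × B)
    (hmulAB : ∀ p q : A × B, mulAB p q = (mul p.1 q.1, bl p.1 q.2 + br p.2 q.1))
    (tl : A × B → M × N → M × N)
    (htl : ∀ (q : A × B) (w : M × N), tl q w = (al q.1 w.1, nl q.1 w.2 + r q.2 w.1))
    (tr : M × N → A × B → M × N)
    (htr : ∀ (w : M × N) (q : A × B), tr w q = (ar w.1 q.1, l w.1 q.2 + nr w.2 q.1)) :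
    (∀ (p q : A × B) (w : M × N), tl (mulAB p q) w = tl p (tl q w)) ∧
    (∀ (p : A × B) (w : M × N) (q : A × B), tr (tl p w) q = tl p (tr w q)) ∧
    (∀ (w : M × N) (p q : A × B), tr (tr w p) q = tr w (mulAB p q)) :=
  semidirect_bimodule_MN_over_AB_general mul al ar hal halr har bl br nl nr hnl hnlr hnr l r hl1 hl2
    hl3 hr1 hr2 hr3 mulAB hmulAB tl htl tr htr
end

section
/- (Semidirect product) Let M →^R A be a relative Rota-Baxter algebra and (N →^S B, l, r) a bimodule over it. Then R ⊕ S : M ⊕ N → A ⊕ B, (m,n) ↦ (R(m), S(n)), is a relative Rota-Baxter operator with respect to the semidirect product algebra A ⊕ B and its bimodule M ⊕ N with actions (a,b)▷(m,n) = (a·_M m, a·_N n + r(b,m)) and (m,n)◁(a,b) = (m·_M a, l(m,b) + n·_N a). Hence M ⊕ N →^{R⊕S} A ⊕ B is a relative Rota-Baxter algebra. -/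
/-! Both components reduce to the Rota-Baxter identities of the components: the first is the
identity of `R`, and in the second the two cross terms `R(m)·S(n')` and `S(n)·R(m')` are exactly
the two mixed identities of the bimodule, whose right-hand sides add up under the additivity of `S`. -/

theorem map_add_of_mixed_rotaBaxter {A M B N F : Type*} [AddCommMonoid B] [AddCommMonoid N]
    [FunLike F N B] [AddHomClass F N B] (R : M → A) (S : F)
    (bl : A → B → B) (br : B → A → B) (nl : A → N → N) (nr : N → A → N)
    (l : M → B → N) (r : B → M → N)
    (hrs : ∀ (m : M) (n : N), bl (R m) (S n) = S (nl (R m) n + l m (S n)))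
    (hsr : ∀ (n : N) (m : M), br (S n) (R m) = S (r (S n) m + nr n (R m)))
    (m m' : M) (n n' : N) :
    bl (R m) (S n') + br (S n) (R m') =
      S ((nl (R m) n' + r (S n) m') + (l m (S n') + nr n (R m'))) := by
  rw [hrs, hsr, ← map_add, add_add_add_comm, add_comm (l m (S n'))]

theorem semidirect_product_relative_rota_baxter_general
    {K : Type*} [Field K] {A M B N : Type*}
    [AddCommGroup A] [Module K A] [AddCommGroup M] [Module K M]
    [AddCommGroup B] [Module K B] [AddCommGroup N] [Module K N]
    (mul : A →ₗ[K] A →ₗ[K] A)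
    (al : A →ₗ[K] M →ₗ[K] M) (ar : M →ₗ[K] A →ₗ[K] M)
    (R : M →ₗ[K] A)
    (hR : ∀ m m' : M, mul (R m) (R m') = R (al (R m) m' + ar m (R m')))
    (S : N →ₗ[K] B)
    (bl : A →ₗ[K] B →ₗ[K] B) (br : B →ₗ[K] A →ₗ[K] B)
    (nl : A →ₗ[K] N →ₗ[K] N) (nr : N →ₗ[K] A →ₗ[K] N)
    (l : M →ₗ[K] B →ₗ[K] N) (r : B →ₗ[K] M →ₗ[K] N)
    (hrs : ∀ (m : M) (n : N), bl (R m) (S n) = S (nl (R m) n + l m (S n)))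
    (hsr : ∀ (n : N) (m : M), br (S n) (R m) = S (r (S n) m + nr n (R m)))
    -- semidirect product multiplication on A × B and actions on M × N
    (mulAB : A × B → A × B → A × B)
    (hmulAB : ∀ p q : A × B, mulAB p q = (mul p.1 q.1, bl p.1 q.2 + br p.2 q.1))
    (tl : A × B → M × N → M × N)
    (htl : ∀ (q : A × B) (w : M × N), tl q w = (al q.1 w.1, nl q.1 w.2 + r q.2 w.1))
    (tr : M × N → A × B → M × N)
    (htr : ∀ (w : M × N) (q : A × B), tr w q = (ar w.1 q.1, l w.1 q.2 + nr w.2 q.1))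
    (RS : M × N → A × B) (hRS : ∀ w : M × N, RS w = (R w.1, S w.2)) :
    ∀ w w' : M × N, mulAB (RS w) (RS w') = RS (tl (RS w) w' + tr w (RS w')) := by
  rintro ⟨m, n⟩ ⟨m', n'⟩
  simp only [hRS, hmulAB, htl, htr, Prod.mk_add_mk]
  exact Prod.ext (hR m m') (map_add_of_mixed_rotaBaxter R S (bl · ·) (br · ·) (nl · ·) (nr · ·)
    (l · ·) (r · ·) hrs hsr m m' n n')

/-- Semidirect product: R ⊕ S is a relative Rota-Baxter operator on M ⊕ N over A ⊕ B. -/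
theorem semidirect_product_relative_rota_baxter
    {K : Type*} [Field K] {A M B N : Type*}
    [AddCommGroup A] [Module K A] [AddCommGroup M] [Module K M]
    [AddCommGroup B] [Module K B] [AddCommGroup N] [Module K N]
    (mul : A →ₗ[K] A →ₗ[K] A)
    (hmul : ∀ a b c : A, mul (mul a b) c = mul a (mul b c))
    (al : A →ₗ[K] M →ₗ[K] M) (ar : M →ₗ[K] A →ₗ[K] M)
    (hal : ∀ (a b : A) (m : M), al (mul a b) m = al a (al b m))
    (halr : ∀ (a : A) (m : M) (b : A), ar (al a m) b = al a (ar m b))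
    (har : ∀ (m : M) (a b : A), ar (ar m a) b = ar m (mul a b))
    (R : M →ₗ[K] A)
    (hR : ∀ m m' : M, mul (R m) (R m') = R (al (R m) m' + ar m (R m')))
    (S : N →ₗ[K] B)
    (bl : A →ₗ[K] B →ₗ[K] B) (br : B →ₗ[K] A →ₗ[K] B)
    (hbl : ∀ (a a' : A) (b : B), bl (mul a a') b = bl a (bl a' b))
    (hblr : ∀ (a : A) (b : B) (a' : A), br (bl a b) a' = bl a (br b a'))
    (hbr : ∀ (b : B) (a a' : A), br (br b a) a' = br b (mul a a'))
    (nl : A →ₗ[K] N →ₗ[K] N) (nr : N →ₗ[K] A →ₗ[K] N)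
    (hnl : ∀ (a a' : A) (n : N), nl (mul a a') n = nl a (nl a' n))
    (hnlr : ∀ (a : A) (n : N) (a' : A), nr (nl a n) a' = nl a (nr n a'))
    (hnr : ∀ (n : N) (a a' : A), nr (nr n a) a' = nr n (mul a a'))
    (l : M →ₗ[K] B →ₗ[K] N) (r : B →ₗ[K] M →ₗ[K] N)
    (hl1 : ∀ (a : A) (m : M) (b : B), l (al a m) b = nl a (l m b))
    (hl2 : ∀ (m : M) (a : A) (b : B), l (ar m a) b = l m (bl a b))
    (hl3 : ∀ (m : M) (b : B) (a : A), l m (br b a) = nr (l m b) a)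
    (hr1 : ∀ (a : A) (b : B) (m : M), r (bl a b) m = nl a (r b m))
    (hr2 : ∀ (b : B) (a : A) (m : M), r (br b a) m = r b (al a m))
    (hr3 : ∀ (b : B) (m : M) (a : A), r b (ar m a) = nr (r b m) a)
    (hrs : ∀ (m : M) (n : N), bl (R m) (S n) = S (nl (R m) n + l m (S n)))
    (hsr : ∀ (n : N) (m : M), br (S n) (R m) = S (r (S n) m + nr n (R m)))
    -- semidirect product multiplication on A × B and actions on M × N
    (mulAB : A × B → A × B → A × B)
    (hmulAB : ∀ p q : A × B, mulAB p q = (mul p.1 q.1, bl p.1 q.2 + br p.2 q.1))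
    (tl : A × B → M × N → M × N)
    (htl : ∀ (q : A × B) (w : M × N), tl q w = (al q.1 w.1, nl q.1 w.2 + r q.2 w.1))
    (tr : M × N → A × B → M × N)
    (htr : ∀ (w : M × N) (q : A × B), tr w q = (ar w.1 q.1, l w.1 q.2 + nr w.2 q.1))
    (RS : M × N → A × B) (hRS : ∀ w : M × N, RS w = (R w.1, S w.2)) :
    ∀ w w' : M × N, mulAB (RS w) (RS w') = RS (tl (RS w) w' + tr w (RS w')) :=
  semidirect_product_relative_rota_baxter_general mul al ar R hR S bl br nl nr l r hrs hsr mulAB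
    hmulAB tl htl tr htr RS hRS
end

section
/- Let M →^R A be a relative Rota-Baxter algebra and (N →^S B, l, r) a bimodule over it. Then N is a representation of the induced dendriform algebra (M, ≺_R, ≻_R) with action maps m ≺ n = l(m, S(n)), m ≻ n = R(m)·_N n, n ≺ m = n·_N R(m), and n ≻ m = r(S(n), m). -/
/-! Six of the nine identities are single bimodule axioms. The other three, in which a sum sits
inside `R` or `S`, combine such an axiom with the relative Rota-Baxter identity `hR` or with
the compatibilities `hrs`, `hsr`. -/

theorem induced_dendriform_representation_general
    {K : Type*} [Field K] {A M B N : Type*}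
    [AddCommGroup A] [Module K A] [AddCommGroup M] [Module K M]
    [AddCommGroup B] [Module K B] [AddCommGroup N] [Module K N]
    (mul : A →ₗ[K] A →ₗ[K] A)
    (al : A →ₗ[K] M →ₗ[K] M) (ar : M →ₗ[K] A →ₗ[K] M)
    (R : M →ₗ[K] A)
    (hR : ∀ m m' : M, mul (R m) (R m') = R (al (R m) m' + ar m (R m')))
    (S : N →ₗ[K] B)
    (bl : A →ₗ[K] B →ₗ[K] B) (br : B →ₗ[K] A →ₗ[K] B)
    (nl : A →ₗ[K] N →ₗ[K] N) (nr : N →ₗ[K] A →ₗ[K] N)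
    (hnl : ∀ (a a' : A) (n : N), nl (mul a a') n = nl a (nl a' n))
    (hnlr : ∀ (a : A) (n : N) (a' : A), nr (nl a n) a' = nl a (nr n a'))
    (hnr : ∀ (n : N) (a a' : A), nr (nr n a) a' = nr n (mul a a'))
    (l : M →ₗ[K] B →ₗ[K] N) (r : B →ₗ[K] M →ₗ[K] N)
    (hl1 : ∀ (a : A) (m : M) (b : B), l (al a m) b = nl a (l m b))
    (hl2 : ∀ (m : M) (a : A) (b : B), l (ar m a) b = l m (bl a b))
    (hl3 : ∀ (m : M) (b : B) (a : A), l m (br b a) = nr (l m b) a)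
    (hr1 : ∀ (a : A) (b : B) (m : M), r (bl a b) m = nl a (r b m))
    (hr2 : ∀ (b : B) (a : A) (m : M), r (br b a) m = r b (al a m))
    (hr3 : ∀ (b : B) (m : M) (a : A), r b (ar m a) = nr (r b m) a)
    (hrs : ∀ (m : M) (n : N), bl (R m) (S n) = S (nl (R m) n + l m (S n)))
    (hsr : ∀ (n : N) (m : M), br (S n) (R m) = S (r (S n) m + nr n (R m))) :
    -- N is a representation of the dendriform algebra (M, ≺_R, ≻_R) with
    -- m ≺ n = l m (S n), m ≻ n = nl (R m) n, n ≺ m = nr n (R m), n ≻ m = r (S n) m.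
    -- Axiom (x ≺ y) ≺ z = x ≺ (y ≺ z + y ≻ z), one argument from N:
    (∀ (e : N) (y z : M),
        nr (nr e (R y)) (R z) = nr e (R (ar y (R z) + al (R y) z))) ∧
    (∀ (x : M) (e : N) (z : M),
        nr (l x (S e)) (R z) = l x (S (nr e (R z) + r (S e) z))) ∧
    (∀ (x y : M) (e : N),
        l (ar x (R y)) (S e) = l x (S (l y (S e) + nl (R y) e))) ∧
    -- Axiom (x ≻ y) ≺ z = x ≻ (y ≺ z):
    (∀ (e : N) (y z : M),
        nr (r (S e) y) (R z) = r (S e) (ar y (R z))) ∧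
    (∀ (x : M) (e : N) (z : M),
        nr (nl (R x) e) (R z) = nl (R x) (nr e (R z))) ∧
    (∀ (x y : M) (e : N),
        l (al (R x) y) (S e) = nl (R x) (l y (S e))) ∧
    -- Axiom (x ≺ y + x ≻ y) ≻ z = x ≻ (y ≻ z):
    (∀ (e : N) (y z : M),
        r (S (nr e (R y) + r (S e) y)) z = r (S e) (al (R y) z)) ∧
    (∀ (x : M) (e : N) (z : M),
        r (S (l x (S e) + nl (R x) e)) z = nl (R x) (r (S e) z)) ∧
    (∀ (x y : M) (e : N),
        nl (R (ar x (R y) + al (R x) y)) e = nl (R x) (nl (R y) e)) := by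
  refine ⟨fun e y z => ?_, fun x e z => ?_, fun x y e => ?_, fun e y z => (hr3 _ _ _).symm,
    fun x e z => hnlr _ _ _, fun x y e => hl1 _ _ _, fun e y z => ?_, fun x e z => ?_,
    fun x y e => ?_⟩
  · rw [hnr, add_comm, ← hR]
  · rw [← hl3, hsr, add_comm]
  · rw [hl2, hrs, add_comm]
  · rw [add_comm, ← hsr, hr2]
  · rw [add_comm, ← hrs, hr1]
  · rw [add_comm, ← hR, hnl]

/-- A bimodule over a relative Rota-Baxter algebra gives a representation of the
induced dendriform algebra (M, ≺_R, ≻_R) on N. -/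
theorem induced_dendriform_representation
    {K : Type*} [Field K] {A M B N : Type*}
    [AddCommGroup A] [Module K A] [AddCommGroup M] [Module K M]
    [AddCommGroup B] [Module K B] [AddCommGroup N] [Module K N]
    (mul : A →ₗ[K] A →ₗ[K] A)
    (hmul : ∀ a b c : A, mul (mul a b) c = mul a (mul b c))
    (al : A →ₗ[K] M →ₗ[K] M) (ar : M →ₗ[K] A →ₗ[K] M)
    (hal : ∀ (a b : A) (m : M), al (mul a b) m = al a (al b m))
    (halr : ∀ (a : A) (m : M) (b : A), ar (al a m) b = al a (ar m b))
    (har : ∀ (m : M) (a b : A), ar (ar m a) b = ar m (mul a b))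
    (R : M →ₗ[K] A)
    (hR : ∀ m m' : M, mul (R m) (R m') = R (al (R m) m' + ar m (R m')))
    (S : N →ₗ[K] B)
    (bl : A →ₗ[K] B →ₗ[K] B) (br : B →ₗ[K] A →ₗ[K] B)
    (hbl : ∀ (a a' : A) (b : B), bl (mul a a') b = bl a (bl a' b))
    (hblr : ∀ (a : A) (b : B) (a' : A), br (bl a b) a' = bl a (br b a'))
    (hbr : ∀ (b : B) (a a' : A), br (br b a) a' = br b (mul a a'))
    (nl : A →ₗ[K] N →ₗ[K] N) (nr : N →ₗ[K] A →ₗ[K] N)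
    (hnl : ∀ (a a' : A) (n : N), nl (mul a a') n = nl a (nl a' n))
    (hnlr : ∀ (a : A) (n : N) (a' : A), nr (nl a n) a' = nl a (nr n a'))
    (hnr : ∀ (n : N) (a a' : A), nr (nr n a) a' = nr n (mul a a'))
    (l : M →ₗ[K] B →ₗ[K] N) (r : B →ₗ[K] M →ₗ[K] N)
    (hl1 : ∀ (a : A) (m : M) (b : B), l (al a m) b = nl a (l m b))
    (hl2 : ∀ (m : M) (a : A) (b : B), l (ar m a) b = l m (bl a b))
    (hl3 : ∀ (m : M) (b : B) (a : A), l m (br b a) = nr (l m b) a)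
    (hr1 : ∀ (a : A) (b : B) (m : M), r (bl a b) m = nl a (r b m))
    (hr2 : ∀ (b : B) (a : A) (m : M), r (br b a) m = r b (al a m))
    (hr3 : ∀ (b : B) (m : M) (a : A), r b (ar m a) = nr (r b m) a)
    (hrs : ∀ (m : M) (n : N), bl (R m) (S n) = S (nl (R m) n + l m (S n)))
    (hsr : ∀ (n : N) (m : M), br (S n) (R m) = S (r (S n) m + nr n (R m))) :
    -- N is a representation of the dendriform algebra (M, ≺_R, ≻_R) with
    -- m ≺ n = l m (S n), m ≻ n = nl (R m) n, n ≺ m = nr n (R m), n ≻ m = r (S n) m.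
    -- Axiom (x ≺ y) ≺ z = x ≺ (y ≺ z + y ≻ z), one argument from N:
    (∀ (e : N) (y z : M),
        nr (nr e (R y)) (R z) = nr e (R (ar y (R z) + al (R y) z))) ∧
    (∀ (x : M) (e : N) (z : M),
        nr (l x (S e)) (R z) = l x (S (nr e (R z) + r (S e) z))) ∧
    (∀ (x y : M) (e : N),
        l (ar x (R y)) (S e) = l x (S (l y (S e) + nl (R y) e))) ∧
    -- Axiom (x ≻ y) ≺ z = x ≻ (y ≺ z):
    (∀ (e : N) (y z : M),
        nr (r (S e) y) (R z) = r (S e) (ar y (R z))) ∧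
    (∀ (x : M) (e : N) (z : M),
        nr (nl (R x) e) (R z) = nl (R x) (nr e (R z))) ∧
    (∀ (x y : M) (e : N),
        l (al (R x) y) (S e) = nl (R x) (l y (S e))) ∧
    -- Axiom (x ≺ y + x ≻ y) ≻ z = x ≻ (y ≻ z):
    (∀ (e : N) (y z : M),
        r (S (nr e (R y) + r (S e) y)) z = r (S e) (al (R y) z)) ∧
    (∀ (x : M) (e : N) (z : M),
        r (S (l x (S e) + nl (R x) e)) z = nl (R x) (r (S e) z)) ∧
    (∀ (x y : M) (e : N),
        nl (R (ar x (R y) + al (R x) y)) e = nl (R x) (nl (R y) e)) :=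
  induced_dendriform_representation_general mul al ar R hR S bl br nl nr hnl hnlr hnr l r hl1 hl2
    hl3 hr1 hr2 hr3 hrs hsr
end

section
/- Let M →^R A be a relative Rota-Baxter algebra and (N →^S B, l, r) a bimodule over it. Define m ▷_B b = R(m)·_B b − S(l(m, b)) and b ◁_B m = b·_B R(m) − S(r(b, m)). Then these maps make B into a bimodule over the associative algebra M_Tot = (M, ∗_R), where m ∗_R m' = R(m)·_M m' + m·_M R(m'). -/
/-!
Expanding either side of each identity with the bimodule axioms of `B` over `A`, the mixed
compatibilities (bimod-l), (bimod-r) and the Rota-Baxter identity `R m · R m' = R (m ∗_R m')`,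
the only terms that do not match are `S (l m (S n))` and `S (r (S n) m)`. These come once from
expanding `R m ▷ S n` resp. `S n ◁ R m` by (bimod-rs), (bimod-sr), and once with the opposite
sign from the correction term `- S (l m ·)` resp. `- S (r · m)`, so they cancel.
-/

namespace RelativeRotaBaxter

variable {K A M B N : Type*} [CommRing K]
  [AddCommGroup A] [Module K A] [AddCommGroup M] [Module K M]
  [AddCommGroup B] [Module K B] [AddCommGroup N] [Module K N]

def totalMul (al : A →ₗ[K] M →ₗ[K] M) (ar : M →ₗ[K] A →ₗ[K] M) (R : M →ₗ[K] A) (m m' : M) :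
    M :=
  al (R m) m' + ar m (R m')

def totalLeftAction (R : M →ₗ[K] A) (S : N →ₗ[K] B) (bl : A →ₗ[K] B →ₗ[K] B)
    (l : M →ₗ[K] B →ₗ[K] N) (m : M) (b : B) : B :=
  bl (R m) b - S (l m b)

def totalRightAction (R : M →ₗ[K] A) (S : N →ₗ[K] B) (br : B →ₗ[K] A →ₗ[K] B)
    (r : B →ₗ[K] M →ₗ[K] N) (b : B) (m : M) : B :=
  br b (R m) - S (r b m)

variable {mul : A →ₗ[K] A →ₗ[K] A} {al : A →ₗ[K] M →ₗ[K] M} {ar : M →ₗ[K] A →ₗ[K] M}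
  {R : M →ₗ[K] A} {S : N →ₗ[K] B} {bl : A →ₗ[K] B →ₗ[K] B} {br : B →ₗ[K] A →ₗ[K] B}
  {nl : A →ₗ[K] N →ₗ[K] N} {nr : N →ₗ[K] A →ₗ[K] N}
  {l : M →ₗ[K] B →ₗ[K] N} {r : B →ₗ[K] M →ₗ[K] N}

theorem map_totalMul (hR : ∀ m m' : M, mul (R m) (R m') = R (al (R m) m' + ar m (R m')))
    (m m' : M) : R (totalMul al ar R m m') = mul (R m) (R m') :=
  (hR m m').symm

theorem totalLeftAction_totalMul
    (hR : ∀ m m' : M, mul (R m) (R m') = R (al (R m) m' + ar m (R m')))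
    (hbl : ∀ (a a' : A) (b : B), bl (mul a a') b = bl a (bl a' b))
    (hl1 : ∀ (a : A) (m : M) (b : B), l (al a m) b = nl a (l m b))
    (hl2 : ∀ (m : M) (a : A) (b : B), l (ar m a) b = l m (bl a b))
    (hrs : ∀ (m : M) (n : N), bl (R m) (S n) = S (nl (R m) n + l m (S n)))
    (m m' : M) (b : B) :
    totalLeftAction R S bl l (totalMul al ar R m m') b =
      totalLeftAction R S bl l m (totalLeftAction R S bl l m' b) := by
  have hl_totalMul : l (totalMul al ar R m m') b = nl (R m) (l m' b) + l m (bl (R m') b) := by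
    simp only [totalMul, map_add, LinearMap.add_apply, hl1, hl2]
  simp only [totalLeftAction, map_totalMul hR, hl_totalMul, hbl, map_sub, map_add, hrs]
  abel

theorem totalRightAction_totalLeftAction
    (hblr : ∀ (a : A) (b : B) (a' : A), br (bl a b) a' = bl a (br b a'))
    (hl3 : ∀ (m : M) (b : B) (a : A), l m (br b a) = nr (l m b) a)
    (hr1 : ∀ (a : A) (b : B) (m : M), r (bl a b) m = nl a (r b m))
    (hrs : ∀ (m : M) (n : N), bl (R m) (S n) = S (nl (R m) n + l m (S n)))
    (hsr : ∀ (n : N) (m : M), br (S n) (R m) = S (r (S n) m + nr n (R m)))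
    (m : M) (b : B) (m' : M) :
    totalRightAction R S br r (totalLeftAction R S bl l m b) m' =
      totalLeftAction R S bl l m (totalRightAction R S br r b m') := by
  simp only [totalLeftAction, totalRightAction, map_sub, map_add, LinearMap.sub_apply,
    hblr, hl3, hr1, hrs, hsr]
  abel

theorem totalRightAction_totalRightAction
    (hR : ∀ m m' : M, mul (R m) (R m') = R (al (R m) m' + ar m (R m')))
    (hbr : ∀ (b : B) (a a' : A), br (br b a) a' = br b (mul a a'))
    (hr2 : ∀ (b : B) (a : A) (m : M), r (br b a) m = r b (al a m))
    (hr3 : ∀ (b : B) (m : M) (a : A), r b (ar m a) = nr (r b m) a)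
    (hsr : ∀ (n : N) (m : M), br (S n) (R m) = S (r (S n) m + nr n (R m)))
    (b : B) (m m' : M) :
    totalRightAction R S br r (totalRightAction R S br r b m) m' =
      totalRightAction R S br r b (totalMul al ar R m m') := by
  have hr_totalMul : r b (totalMul al ar R m m') = r (br b (R m)) m' + nr (r b m) (R m') := by
    simp only [totalMul, map_add, hr2, hr3]
  simp only [totalRightAction, map_totalMul hR, hr_totalMul, hbr, map_sub, map_add,
    LinearMap.sub_apply, hsr]
  abel

end RelativeRotaBaxter

open RelativeRotaBaxter in
theorem B_bimodule_over_total_algebra_general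
    {K : Type*} [Field K] {A M B N : Type*}
    [AddCommGroup A] [Module K A] [AddCommGroup M] [Module K M]
    [AddCommGroup B] [Module K B] [AddCommGroup N] [Module K N]
    (mul : A →ₗ[K] A →ₗ[K] A)
    (al : A →ₗ[K] M →ₗ[K] M) (ar : M →ₗ[K] A →ₗ[K] M)
    (R : M →ₗ[K] A)
    (hR : ∀ m m' : M, mul (R m) (R m') = R (al (R m) m' + ar m (R m')))
    (S : N →ₗ[K] B)
    (bl : A →ₗ[K] B →ₗ[K] B) (br : B →ₗ[K] A →ₗ[K] B)
    (hbl : ∀ (a a' : A) (b : B), bl (mul a a') b = bl a (bl a' b))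
    (hblr : ∀ (a : A) (b : B) (a' : A), br (bl a b) a' = bl a (br b a'))
    (hbr : ∀ (b : B) (a a' : A), br (br b a) a' = br b (mul a a'))
    (nl : A →ₗ[K] N →ₗ[K] N) (nr : N →ₗ[K] A →ₗ[K] N)
    (l : M →ₗ[K] B →ₗ[K] N) (r : B →ₗ[K] M →ₗ[K] N)
    (hl1 : ∀ (a : A) (m : M) (b : B), l (al a m) b = nl a (l m b))
    (hl2 : ∀ (m : M) (a : A) (b : B), l (ar m a) b = l m (bl a b))
    (hl3 : ∀ (m : M) (b : B) (a : A), l m (br b a) = nr (l m b) a)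
    (hr1 : ∀ (a : A) (b : B) (m : M), r (bl a b) m = nl a (r b m))
    (hr2 : ∀ (b : B) (a : A) (m : M), r (br b a) m = r b (al a m))
    (hr3 : ∀ (b : B) (m : M) (a : A), r b (ar m a) = nr (r b m) a)
    (hrs : ∀ (m : M) (n : N), bl (R m) (S n) = S (nl (R m) n + l m (S n)))
    (hsr : ∀ (n : N) (m : M), br (S n) (R m) = S (r (S n) m + nr n (R m)))
    -- the actions of M_Tot on B
    (tri : M → B → B) (htri : ∀ m b, tri m b = bl (R m) b - S (l m b))
    (trd : B → M → B) (htrd : ∀ b m, trd b m = br b (R m) - S (r b m))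
    -- the total associative multiplication on M
    (star : M → M → M) (hstar : ∀ m m', star m m' = al (R m) m' + ar m (R m')) :
    (∀ (m m' : M) (b : B), tri (star m m') b = tri m (tri m' b)) ∧
    (∀ (m : M) (b : B) (m' : M), trd (tri m b) m' = tri m (trd b m')) ∧
    (∀ (b : B) (m m' : M), trd (trd b m) m' = trd b (star m m')) := by
  obtain rfl : tri = totalLeftAction R S bl l := funext₂ htri
  obtain rfl : trd = totalRightAction R S br r := funext₂ htrd
  obtain rfl : star = totalMul al ar R := funext₂ hstar
  exact ⟨totalLeftAction_totalMul hR hbl hl1 hl2 hrs,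
    totalRightAction_totalLeftAction hblr hl3 hr1 hrs hsr,
    totalRightAction_totalRightAction hR hbr hr2 hr3 hsr⟩

/-- The operations m ▷ b = R(m)·b − S(l(m,b)) and b ◁ m = b·R(m) − S(r(b,m)) make B
a bimodule over the total associative algebra M_Tot = (M, ∗_R). -/
theorem B_bimodule_over_total_algebra
    {K : Type*} [Field K] {A M B N : Type*}
    [AddCommGroup A] [Module K A] [AddCommGroup M] [Module K M]
    [AddCommGroup B] [Module K B] [AddCommGroup N] [Module K N]
    (mul : A →ₗ[K] A →ₗ[K] A)
    (hmul : ∀ a b c : A, mul (mul a b) c = mul a (mul b c))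
    (al : A →ₗ[K] M →ₗ[K] M) (ar : M →ₗ[K] A →ₗ[K] M)
    (hal : ∀ (a b : A) (m : M), al (mul a b) m = al a (al b m))
    (halr : ∀ (a : A) (m : M) (b : A), ar (al a m) b = al a (ar m b))
    (har : ∀ (m : M) (a b : A), ar (ar m a) b = ar m (mul a b))
    (R : M →ₗ[K] A)
    (hR : ∀ m m' : M, mul (R m) (R m') = R (al (R m) m' + ar m (R m')))
    (S : N →ₗ[K] B)
    (bl : A →ₗ[K] B →ₗ[K] B) (br : B →ₗ[K] A →ₗ[K] B)
    (hbl : ∀ (a a' : A) (b : B), bl (mul a a') b = bl a (bl a' b))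
    (hblr : ∀ (a : A) (b : B) (a' : A), br (bl a b) a' = bl a (br b a'))
    (hbr : ∀ (b : B) (a a' : A), br (br b a) a' = br b (mul a a'))
    (nl : A →ₗ[K] N →ₗ[K] N) (nr : N →ₗ[K] A →ₗ[K] N)
    (hnl : ∀ (a a' : A) (n : N), nl (mul a a') n = nl a (nl a' n))
    (hnlr : ∀ (a : A) (n : N) (a' : A), nr (nl a n) a' = nl a (nr n a'))
    (hnr : ∀ (n : N) (a a' : A), nr (nr n a) a' = nr n (mul a a'))
    (l : M →ₗ[K] B →ₗ[K] N) (r : B →ₗ[K] M →ₗ[K] N)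
    (hl1 : ∀ (a : A) (m : M) (b : B), l (al a m) b = nl a (l m b))
    (hl2 : ∀ (m : M) (a : A) (b : B), l (ar m a) b = l m (bl a b))
    (hl3 : ∀ (m : M) (b : B) (a : A), l m (br b a) = nr (l m b) a)
    (hr1 : ∀ (a : A) (b : B) (m : M), r (bl a b) m = nl a (r b m))
    (hr2 : ∀ (b : B) (a : A) (m : M), r (br b a) m = r b (al a m))
    (hr3 : ∀ (b : B) (m : M) (a : A), r b (ar m a) = nr (r b m) a)
    (hrs : ∀ (m : M) (n : N), bl (R m) (S n) = S (nl (R m) n + l m (S n)))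
    (hsr : ∀ (n : N) (m : M), br (S n) (R m) = S (r (S n) m + nr n (R m)))
    -- the actions of M_Tot on B
    (tri : M → B → B) (htri : ∀ m b, tri m b = bl (R m) b - S (l m b))
    (trd : B → M → B) (htrd : ∀ b m, trd b m = br b (R m) - S (r b m))
    -- the total associative multiplication on M
    (star : M → M → M) (hstar : ∀ m m', star m m' = al (R m) m' + ar m (R m')) :
    (∀ (m m' : M) (b : B), tri (star m m') b = tri m (tri m' b)) ∧
    (∀ (m : M) (b : B) (m' : M), trd (tri m b) m' = tri m (trd b m')) ∧
    (∀ (b : B) (m m' : M), trd (trd b m) m' = trd b (star m m')) :=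
  B_bimodule_over_total_algebra_general mul al ar R hR S bl br hbl hblr hbr nl nr l r hl1 hl2 hl3
    hr1 hr2 hr3 hrs hsr tri htri trd htrd star hstar
end

section
/- Let (D, ≺, ≻) be a dendriform algebra and E a representation of D. Give E two D_Tot-bimodule structures: E_Tot with 𝗑·e = 𝗑≺e + 𝗑≻e, e·𝗑 = e≺𝗑 + e≻𝗑; and E with 𝗑·e = 𝗑≻e, e·𝗑 = e≺𝗑. Then (E →^{id_E} E_Tot, l, r) with l(x, e) = x ≺ e and r(e, x) = e ≻ x is a bimodule over the relative Rota-Baxter algebra D →^{id_D} D_Tot. -/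
/-!
Once the total actions are split into their `≺` and `≻` parts, each bimodule condition is one of
the nine representation identities, except the three associativity conditions of `E_Tot`, each of
which is the sum of three of them.
-/

section TotalRepresentation

variable {K D E : Type*} [CommSemiring K] [AddCommMonoid D] [Module K D]
  [AddCommMonoid E] [Module K E]
  {pre suc : D →ₗ[K] D →ₗ[K] D} {pde sde : D →ₗ[K] E →ₗ[K] E} {ped sed : E →ₗ[K] D →ₗ[K] E}

theorem total_left_action_assoc
    (he3 : ∀ (x y : D) (e : E), pde (pre x y) e = pde x (pde y e + sde y e))
    (he6 : ∀ (x y : D) (e : E), pde (suc x y) e = sde x (pde y e))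
    (he9 : ∀ (x y : D) (e : E), sde (pre x y + suc x y) e = sde x (sde y e))
    (x y : D) (e : E) :
    pde (pre x y + suc x y) e + sde (pre x y + suc x y) e =
      pde x (pde y e + sde y e) + sde x (pde y e + sde y e) := by
  rw [he9]
  simp only [map_add, LinearMap.add_apply, he3, he6]
  abel

theorem total_actions_commute
    (he2 : ∀ (x : D) (e : E) (z : D), ped (pde x e) z = pde x (ped e z + sed e z))
    (he5 : ∀ (x : D) (e : E) (z : D), ped (sde x e) z = sde x (ped e z))
    (he8 : ∀ (x : D) (e : E) (z : D), sed (pde x e + sde x e) z = sde x (sed e z))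
    (x : D) (e : E) (y : D) :
    ped (pde x e + sde x e) y + sed (pde x e + sde x e) y =
      pde x (ped e y + sed e y) + sde x (ped e y + sed e y) := by
  rw [he8]
  simp only [map_add, LinearMap.add_apply, he2, he5]
  abel

theorem total_right_action_assoc
    (he1 : ∀ (e : E) (y z : D), ped (ped e y) z = ped e (pre y z + suc y z))
    (he4 : ∀ (e : E) (y z : D), ped (sed e y) z = sed e (pre y z))
    (he7 : ∀ (e : E) (y z : D), sed (ped e y + sed e y) z = sed e (suc y z))
    (e : E) (x y : D) :
    ped (ped e x + sed e x) y + sed (ped e x + sed e x) y =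
      ped e (pre x y + suc x y) + sed e (pre x y + suc x y) := by
  rw [he7]
  simp only [map_add, LinearMap.add_apply, he1, he4]
  abel

end TotalRepresentation

theorem dendriform_representation_gives_bimodule_general
    {K : Type*} [Field K] {D E : Type*}
    [AddCommGroup D] [Module K D] [AddCommGroup E] [Module K E]
    -- dendriform algebra D
    (pre suc : D →ₗ[K] D →ₗ[K] D)
    -- representation of D on E: x ≺ e, x ≻ e, e ≺ x, e ≻ x
    (pde sde : D →ₗ[K] E →ₗ[K] E) (ped sed : E →ₗ[K] D →ₗ[K] E)
    -- the nine representation identities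
    (he1 : ∀ (e : E) (y z : D), ped (ped e y) z = ped e (pre y z + suc y z))
    (he2 : ∀ (x : D) (e : E) (z : D), ped (pde x e) z = pde x (ped e z + sed e z))
    (he3 : ∀ (x y : D) (e : E), pde (pre x y) e = pde x (pde y e + sde y e))
    (he4 : ∀ (e : E) (y z : D), ped (sed e y) z = sed e (pre y z))
    (he5 : ∀ (x : D) (e : E) (z : D), ped (sde x e) z = sde x (ped e z))
    (he6 : ∀ (x y : D) (e : E), pde (suc x y) e = sde x (pde y e))
    (he7 : ∀ (e : E) (y z : D), sed (ped e y + sed e y) z = sed e (suc y z))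
    (he8 : ∀ (x : D) (e : E) (z : D), sed (pde x e + sde x e) z = sde x (sed e z))
    (he9 : ∀ (x y : D) (e : E), sde (pre x y + suc x y) e = sde x (sde y e))
    -- total multiplication and the two D_Tot-bimodule structures on E
    (star : D → D → D) (hstar : ∀ x y, star x y = pre x y + suc x y)
    (bl : D → E → E) (hbl : ∀ x e, bl x e = pde x e + sde x e)  -- E_Tot, left
    (br : E → D → E) (hbr : ∀ e x, br e x = ped e x + sed e x)  -- E_Tot, right
    (nl : D → E → E) (hnl : ∀ x e, nl x e = sde x e)            -- E, left
    (nr : E → D → E) (hnr : ∀ e x, nr e x = ped e x)            -- E, right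
    (l : D → E → E) (hl : ∀ x e, l x e = pde x e)
    (r : E → D → E) (hr : ∀ e x, r e x = sed e x) :
    -- E_Tot is a D_Tot-bimodule
    (∀ (x y : D) (e : E), bl (star x y) e = bl x (bl y e)) ∧
    (∀ (x : D) (e : E) (y : D), br (bl x e) y = bl x (br e y)) ∧
    (∀ (e : E) (x y : D), br (br e x) y = br e (star x y)) ∧
    -- E is a D_Tot-bimodule
    (∀ (x y : D) (e : E), nl (star x y) e = nl x (nl y e)) ∧
    (∀ (x : D) (e : E) (y : D), nr (nl x e) y = nl x (nr e y)) ∧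
    (∀ (e : E) (x y : D), nr (nr e x) y = nr e (star x y)) ∧
    -- compatibility of l and r (here the D_Tot-bimodule structure on D is
    -- 𝗑·x = 𝗑 ≻ x, x·𝗑 = x ≺ 𝗑, and R = id_D, S = id_E)
    (∀ (a m : D) (e : E), l (suc a m) e = nl a (l m e)) ∧
    (∀ (m a : D) (e : E), l (pre m a) e = l m (bl a e)) ∧
    (∀ (m : D) (e : E) (a : D), l m (br e a) = nr (l m e) a) ∧
    (∀ (a : D) (e : E) (m : D), r (bl a e) m = nl a (r e m)) ∧
    (∀ (e : E) (a m : D), r (br e a) m = r e (suc a m)) ∧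
    (∀ (e : E) (m a : D), r e (pre m a) = nr (r e m) a) ∧
    -- the relative Rota-Baxter compatibilities with R = id_D and S = id_E
    (∀ (m : D) (n : E), bl m n = nl m n + l m n) ∧
    (∀ (n : E) (m : D), br n m = r n m + nr n m) := by
  obtain rfl : star = fun x y => pre x y + suc x y := funext₂ hstar
  obtain rfl : bl = fun x e => pde x e + sde x e := funext₂ hbl
  obtain rfl : br = fun e x => ped e x + sed e x := funext₂ hbr
  obtain rfl : nl = fun x e => sde x e := funext₂ hnl
  obtain rfl : nr = fun e x => ped e x := funext₂ hnr
  obtain rfl : l = fun x e => pde x e := funext₂ hl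
  obtain rfl : r = fun e x => sed e x := funext₂ hr
  exact ⟨total_left_action_assoc he3 he6 he9, total_actions_commute he2 he5 he8,
    total_right_action_assoc he1 he4 he7, he9, he5, he1, he6, he3,
    fun m e a => (he2 m e a).symm, he8, he7, fun e m a => (he4 e m a).symm,
    fun _ _ => add_comm _ _, fun _ _ => add_comm _ _⟩

/-- A representation E of a dendriform algebra D gives a bimodule
(E →^{id} E_Tot, l, r) over the relative Rota-Baxter algebra D →^{id} D_Tot,
where l(x,e) = x ≺ e and r(e,x) = e ≻ x. -/
theorem dendriform_representation_gives_bimodule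
    {K : Type*} [Field K] {D E : Type*}
    [AddCommGroup D] [Module K D] [AddCommGroup E] [Module K E]
    -- dendriform algebra D
    (pre suc : D →ₗ[K] D →ₗ[K] D)
    (hd1 : ∀ x y z : D, pre (pre x y) z = pre x (pre y z + suc y z))
    (hd2 : ∀ x y z : D, pre (suc x y) z = suc x (pre y z))
    (hd3 : ∀ x y z : D, suc (pre x y + suc x y) z = suc x (suc y z))
    -- representation of D on E: x ≺ e, x ≻ e, e ≺ x, e ≻ x
    (pde sde : D →ₗ[K] E →ₗ[K] E) (ped sed : E →ₗ[K] D →ₗ[K] E)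
    -- the nine representation identities
    (he1 : ∀ (e : E) (y z : D), ped (ped e y) z = ped e (pre y z + suc y z))
    (he2 : ∀ (x : D) (e : E) (z : D), ped (pde x e) z = pde x (ped e z + sed e z))
    (he3 : ∀ (x y : D) (e : E), pde (pre x y) e = pde x (pde y e + sde y e))
    (he4 : ∀ (e : E) (y z : D), ped (sed e y) z = sed e (pre y z))
    (he5 : ∀ (x : D) (e : E) (z : D), ped (sde x e) z = sde x (ped e z))
    (he6 : ∀ (x y : D) (e : E), pde (suc x y) e = sde x (pde y e))
    (he7 : ∀ (e : E) (y z : D), sed (ped e y + sed e y) z = sed e (suc y z))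
    (he8 : ∀ (x : D) (e : E) (z : D), sed (pde x e + sde x e) z = sde x (sed e z))
    (he9 : ∀ (x y : D) (e : E), sde (pre x y + suc x y) e = sde x (sde y e))
    -- total multiplication and the two D_Tot-bimodule structures on E
    (star : D → D → D) (hstar : ∀ x y, star x y = pre x y + suc x y)
    (bl : D → E → E) (hbl : ∀ x e, bl x e = pde x e + sde x e)  -- E_Tot, left
    (br : E → D → E) (hbr : ∀ e x, br e x = ped e x + sed e x)  -- E_Tot, right
    (nl : D → E → E) (hnl : ∀ x e, nl x e = sde x e)            -- E, left
    (nr : E → D → E) (hnr : ∀ e x, nr e x = ped e x)            -- E, right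
    (l : D → E → E) (hl : ∀ x e, l x e = pde x e)
    (r : E → D → E) (hr : ∀ e x, r e x = sed e x) :
    -- E_Tot is a D_Tot-bimodule
    (∀ (x y : D) (e : E), bl (star x y) e = bl x (bl y e)) ∧
    (∀ (x : D) (e : E) (y : D), br (bl x e) y = bl x (br e y)) ∧
    (∀ (e : E) (x y : D), br (br e x) y = br e (star x y)) ∧
    -- E is a D_Tot-bimodule
    (∀ (x y : D) (e : E), nl (star x y) e = nl x (nl y e)) ∧
    (∀ (x : D) (e : E) (y : D), nr (nl x e) y = nl x (nr e y)) ∧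
    (∀ (e : E) (x y : D), nr (nr e x) y = nr e (star x y)) ∧
    -- compatibility of l and r (here the D_Tot-bimodule structure on D is
    -- 𝗑·x = 𝗑 ≻ x, x·𝗑 = x ≺ 𝗑, and R = id_D, S = id_E)
    (∀ (a m : D) (e : E), l (suc a m) e = nl a (l m e)) ∧
    (∀ (m a : D) (e : E), l (pre m a) e = l m (bl a e)) ∧
    (∀ (m : D) (e : E) (a : D), l m (br e a) = nr (l m e) a) ∧
    (∀ (a : D) (e : E) (m : D), r (bl a e) m = nl a (r e m)) ∧
    (∀ (e : E) (a m : D), r (br e a) m = r e (suc a m)) ∧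
    (∀ (e : E) (m a : D), r e (pre m a) = nr (r e m) a) ∧
    -- the relative Rota-Baxter compatibilities with R = id_D and S = id_E
    (∀ (m : D) (n : E), bl m n = nl m n + l m n) ∧
    (∀ (n : E) (m : D), br n m = r n m + nr n m) :=
  dendriform_representation_gives_bimodule_general pre suc pde sde ped sed he1 he2 he3 he4 he5 he6
    he7 he8 he9 star hstar bl hbl br hbr nl hnl nr hnr l hl r hr
end

section
/- Let M →^R A be a relative Rota-Baxter algebra, (N →^S B, l, r) a bimodule over it, and (α, β, γ) ∈ Hom(A^⊗2, B) ⊕ Hom(𝒜^{1,1}, N) ⊕ Hom(M, B) a 2-cocycle (δ_rRB(α,β,γ) = 0). Define on Â = A ⊕ B the product (a,b)·(a',b') = (a·a', a·_B b' + b·_B a' + α(a,a')), on M̂ = M ⊕ N the actions (a,b)·(m,n) = (a·_M m, a·_N n + r(b,m) + β(a,m)) and (m,n)·(a,b) = (m·_M a, l(m,b) + n·_N a + β(m,a)), and R̂(m,n) = (R(m), S(n) + γ(m)). Then Â is an associative algebra, M̂ is an Â-bimodule, and R̂ : M̂ → Â is a relative Rota-Baxter operator; moreover M̂ →^{R̂}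 Â is an abelian extension of M →^R A by N →^S B. -/
/-!
Every identity required of the extension splits into two components. The first one (in `A`
or `M`) is the corresponding identity of `M →ᴿ A`. The second one (in `B` or `N`), once both
sides are expanded by the bimodule axioms of `N →ˢ B`, reduces to one component of
`δ_rRB(α, β, γ) = 0`: associativity of `Â` to the Hochschild condition on `α`, the three
bimodule identities of `M̂` to the three components of `δ_{A,N}^α β = 0`, and the Rota-Baxter
identity of `R̂` to `δ_{M,B} γ + h_R(α, β) = 0`.
-/

section TwistedStructure

variable {K A M B N : Type*} [CommRing K]
  [AddCommGroup A] [Module K A] [AddCommGroup M] [Module K M]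
  [AddCommGroup B] [Module K B] [AddCommGroup N] [Module K N]
  (mul : A →ₗ[K] A →ₗ[K] A) (al : A →ₗ[K] M →ₗ[K] M) (ar : M →ₗ[K] A →ₗ[K] M)
  (R : M →ₗ[K] A) (S : N →ₗ[K] B)
  (bl : A →ₗ[K] B →ₗ[K] B) (br : B →ₗ[K] A →ₗ[K] B)
  (nl : A →ₗ[K] N →ₗ[K] N) (nr : N →ₗ[K] A →ₗ[K] N)
  (l : M →ₗ[K] B →ₗ[K] N) (r : B →ₗ[K] M →ₗ[K] N)
  (alpha : A →ₗ[K] A →ₗ[K] B) (betaAM : A →ₗ[K] M →ₗ[K] N) (betaMA : M →ₗ[K] A →ₗ[K] N)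
  (gamma : M →ₗ[K] B)

def twistedMul (p q : A × B) : A × B :=
  (mul p.1 q.1, bl p.1 q.2 + br p.2 q.1 + alpha p.1 q.1)

def twistedActL (p : A × B) (w : M × N) : M × N :=
  (al p.1 w.1, nl p.1 w.2 + r p.2 w.1 + betaAM p.1 w.1)

def twistedActR (w : M × N) (p : A × B) : M × N :=
  (ar w.1 p.1, l w.1 p.2 + nr w.2 p.1 + betaMA w.1 p.1)

def twistedOp (w : M × N) : A × B :=
  (R w.1, S w.2 + gamma w.1)

variable {mul al ar R S bl br nl nr l r alpha betaAM betaMA gamma}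

theorem twistedMul_assoc
    (hmul : ∀ a b c : A, mul (mul a b) c = mul a (mul b c))
    (hbl : ∀ (a a' : A) (b : B), bl (mul a a') b = bl a (bl a' b))
    (hblr : ∀ (a : A) (b : B) (a' : A), br (bl a b) a' = bl a (br b a'))
    (hbr : ∀ (b : B) (a a' : A), br (br b a) a' = br b (mul a a'))
    (hc1 : ∀ a₁ a₂ a₃ : A,
      bl a₁ (alpha a₂ a₃) - alpha (mul a₁ a₂) a₃ + alpha a₁ (mul a₂ a₃)
        - br (alpha a₁ a₂) a₃ = 0)
    (p q s : A × B) :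
    twistedMul mul bl br alpha (twistedMul mul bl br alpha p q) s =
      twistedMul mul bl br alpha p (twistedMul mul bl br alpha q s) := by
  simp only [twistedMul, map_add, LinearMap.add_apply, hbl, hblr, hbr]
  exact Prod.ext (hmul _ _ _) (by linear_combination (norm := module) -hc1 p.1 q.1 s.1)

theorem twistedActL_mul
    (hal : ∀ (a b : A) (m : M), al (mul a b) m = al a (al b m))
    (hnl : ∀ (a a' : A) (n : N), nl (mul a a') n = nl a (nl a' n))
    (hr1 : ∀ (a : A) (b : B) (m : M), r (bl a b) m = nl a (r b m))
    (hr2 : ∀ (b : B) (a : A) (m : M), r (br b a) m = r b (al a m))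
    (hc4 : ∀ (a₁ a₂ : A) (m : M),
      nl a₁ (betaAM a₂ m) - betaAM (mul a₁ a₂) m + betaAM a₁ (al a₂ m)
        - r (alpha a₁ a₂) m = 0)
    (p q : A × B) (w : M × N) :
    twistedActL al nl r betaAM (twistedMul mul bl br alpha p q) w =
      twistedActL al nl r betaAM p (twistedActL al nl r betaAM q w) := by
  simp only [twistedMul, twistedActL, map_add, LinearMap.add_apply, hnl, hr1, hr2]
  exact Prod.ext (hal _ _ _) (by linear_combination (norm := module) -hc4 p.1 q.1 w.1)

theorem twistedActR_actL_comm
    (halr : ∀ (a : A) (m : M) (b : A), ar (al a m) b = al a (ar m b))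
    (hnlr : ∀ (a : A) (n : N) (a' : A), nr (nl a n) a' = nl a (nr n a'))
    (hl1 : ∀ (a : A) (m : M) (b : B), l (al a m) b = nl a (l m b))
    (hr3 : ∀ (b : B) (m : M) (a : A), r b (ar m a) = nr (r b m) a)
    (hc3 : ∀ (a₁ : A) (m : M) (a₃ : A),
      nl a₁ (betaMA m a₃) - betaMA (al a₁ m) a₃ + betaAM a₁ (ar m a₃)
        - nr (betaAM a₁ m) a₃ = 0)
    (p : A × B) (w : M × N) (q : A × B) :
    twistedActR ar nr l betaMA (twistedActL al nl r betaAM p w) q =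
      twistedActL al nl r betaAM p (twistedActR ar nr l betaMA w q) := by
  simp only [twistedActL, twistedActR, map_add, LinearMap.add_apply, hnlr, hl1, hr3]
  exact Prod.ext (halr _ _ _) (by linear_combination (norm := module) -hc3 p.1 w.1 q.1)

theorem twistedActR_mul
    (har : ∀ (m : M) (a b : A), ar (ar m a) b = ar m (mul a b))
    (hnr : ∀ (n : N) (a a' : A), nr (nr n a) a' = nr n (mul a a'))
    (hl2 : ∀ (m : M) (a : A) (b : B), l (ar m a) b = l m (bl a b))
    (hl3 : ∀ (m : M) (b : B) (a : A), l m (br b a) = nr (l m b) a)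
    (hc2 : ∀ (m : M) (a₂ a₃ : A),
      l m (alpha a₂ a₃) - betaMA (ar m a₂) a₃ + betaMA m (mul a₂ a₃)
        - nr (betaMA m a₂) a₃ = 0)
    (w : M × N) (p q : A × B) :
    twistedActR ar nr l betaMA (twistedActR ar nr l betaMA w p) q =
      twistedActR ar nr l betaMA w (twistedMul mul bl br alpha p q) := by
  simp only [twistedMul, twistedActR, map_add, LinearMap.add_apply, hnr, hl2, hl3]
  exact Prod.ext (har _ _ _) (by linear_combination (norm := module) -hc2 w.1 p.1 q.1)

theorem twistedOp_rotaBaxter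
    (hR : ∀ m m' : M, mul (R m) (R m') = R (al (R m) m' + ar m (R m')))
    (hrs : ∀ (m : M) (n : N), bl (R m) (S n) = S (nl (R m) n + l m (S n)))
    (hsr : ∀ (n : N) (m : M), br (S n) (R m) = S (r (S n) m + nr n (R m)))
    (hc5 : ∀ m₁ m₂ : M,
      (bl (R m₁) (gamma m₂) - S (l m₁ (gamma m₂)))
        - gamma (al (R m₁) m₂ + ar m₁ (R m₂))
        + (br (gamma m₁) (R m₂) - S (r (gamma m₁) m₂))
        + (alpha (R m₁) (R m₂) - S (betaAM (R m₁) m₂) - S (betaMA m₁ (R m₂))) = 0)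
    (w w' : M × N) :
    twistedMul mul bl br alpha (twistedOp R S gamma w) (twistedOp R S gamma w') =
      twistedOp R S gamma (twistedActL al nl r betaAM (twistedOp R S gamma w) w' +
        twistedActR ar nr l betaMA w (twistedOp R S gamma w')) := by
  simp only [twistedMul, twistedActL, twistedActR, twistedOp, map_add, LinearMap.add_apply,
    Prod.mk_add_mk, hrs, hsr] at hc5 ⊢
  exact Prod.ext ((hR w.1 w'.1).trans (map_add R _ _))
    (by linear_combination (norm := module) hc5 w.1 w'.1)

end TwistedStructure

theorem fst_eq_zero_iff_exists_eq_mk {α β : Type*} [Zero α] (p : α × β) :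
    p.1 = 0 ↔ ∃ b : β, p = (0, b) :=
  ⟨fun h => ⟨p.2, Prod.ext h rfl⟩, by rintro ⟨b, rfl⟩; rfl⟩

/-- A 2-cocycle (α, β, γ) of a relative Rota-Baxter algebra with coefficients in a
bimodule determines an abelian extension M̂ →^{R̂} Â on Â = A ⊕ B, M̂ = M ⊕ N. -/
theorem abelian_extension_of_two_cocycle
    {K : Type*} [Field K] {A M B N : Type*}
    [AddCommGroup A] [Module K A] [AddCommGroup M] [Module K M]
    [AddCommGroup B] [Module K B] [AddCommGroup N] [Module K N]
    (mul : A →ₗ[K] A →ₗ[K] A)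
    (hmul : ∀ a b c : A, mul (mul a b) c = mul a (mul b c))
    (al : A →ₗ[K] M →ₗ[K] M) (ar : M →ₗ[K] A →ₗ[K] M)
    (hal : ∀ (a b : A) (m : M), al (mul a b) m = al a (al b m))
    (halr : ∀ (a : A) (m : M) (b : A), ar (al a m) b = al a (ar m b))
    (har : ∀ (m : M) (a b : A), ar (ar m a) b = ar m (mul a b))
    (R : M →ₗ[K] A)
    (hR : ∀ m m' : M, mul (R m) (R m') = R (al (R m) m' + ar m (R m')))
    (S : N →ₗ[K] B)
    (bl : A →ₗ[K] B →ₗ[K] B) (br : B →ₗ[K] A →ₗ[K] B)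
    (hbl : ∀ (a a' : A) (b : B), bl (mul a a') b = bl a (bl a' b))
    (hblr : ∀ (a : A) (b : B) (a' : A), br (bl a b) a' = bl a (br b a'))
    (hbr : ∀ (b : B) (a a' : A), br (br b a) a' = br b (mul a a'))
    (nl : A →ₗ[K] N →ₗ[K] N) (nr : N →ₗ[K] A →ₗ[K] N)
    (hnl : ∀ (a a' : A) (n : N), nl (mul a a') n = nl a (nl a' n))
    (hnlr : ∀ (a : A) (n : N) (a' : A), nr (nl a n) a' = nl a (nr n a'))
    (hnr : ∀ (n : N) (a a' : A), nr (nr n a) a' = nr n (mul a a'))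
    (l : M →ₗ[K] B →ₗ[K] N) (r : B →ₗ[K] M →ₗ[K] N)
    (hl1 : ∀ (a : A) (m : M) (b : B), l (al a m) b = nl a (l m b))
    (hl2 : ∀ (m : M) (a : A) (b : B), l (ar m a) b = l m (bl a b))
    (hl3 : ∀ (m : M) (b : B) (a : A), l m (br b a) = nr (l m b) a)
    (hr1 : ∀ (a : A) (b : B) (m : M), r (bl a b) m = nl a (r b m))
    (hr2 : ∀ (b : B) (a : A) (m : M), r (br b a) m = r b (al a m))
    (hr3 : ∀ (b : B) (m : M) (a : A), r b (ar m a) = nr (r b m) a)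
    (hrs : ∀ (m : M) (n : N), bl (R m) (S n) = S (nl (R m) n + l m (S n)))
    (hsr : ∀ (n : N) (m : M), br (S n) (R m) = S (r (S n) m + nr n (R m)))
    -- a 2-cochain (α, β, γ), with β given by its two components
    (alpha : A →ₗ[K] A →ₗ[K] B)
    (betaAM : A →ₗ[K] M →ₗ[K] N) (betaMA : M →ₗ[K] A →ₗ[K] N)
    (gamma : M →ₗ[K] B)
    -- the 2-cocycle conditions δ_rRB(α, β, γ) = 0
    (hc1 : ∀ a₁ a₂ a₃ : A,
      bl a₁ (alpha a₂ a₃) - alpha (mul a₁ a₂) a₃ + alpha a₁ (mul a₂ a₃)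
        - br (alpha a₁ a₂) a₃ = 0)
    (hc2 : ∀ (m : M) (a₂ a₃ : A),
      l m (alpha a₂ a₃) - betaMA (ar m a₂) a₃ + betaMA m (mul a₂ a₃)
        - nr (betaMA m a₂) a₃ = 0)
    (hc3 : ∀ (a₁ : A) (m : M) (a₃ : A),
      nl a₁ (betaMA m a₃) - betaMA (al a₁ m) a₃ + betaAM a₁ (ar m a₃)
        - nr (betaAM a₁ m) a₃ = 0)
    (hc4 : ∀ (a₁ a₂ : A) (m : M),
      nl a₁ (betaAM a₂ m) - betaAM (mul a₁ a₂) m + betaAM a₁ (al a₂ m)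
        - r (alpha a₁ a₂) m = 0)
    (hc5 : ∀ m₁ m₂ : M,
      (bl (R m₁) (gamma m₂) - S (l m₁ (gamma m₂)))
        - gamma (al (R m₁) m₂ + ar m₁ (R m₂))
        + (br (gamma m₁) (R m₂) - S (r (gamma m₁) m₂))
        + (alpha (R m₁) (R m₂) - S (betaAM (R m₁) m₂) - S (betaMA m₁ (R m₂))) = 0)
    -- the twisted structure on Â = A × B and M̂ = M × N
    (mulE : A × B → A × B → A × B)
    (hmulE : ∀ p q : A × B,
      mulE p q = (mul p.1 q.1, bl p.1 q.2 + br p.2 q.1 + alpha p.1 q.1))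
    (actlE : A × B → M × N → M × N)
    (hactlE : ∀ (p : A × B) (w : M × N),
      actlE p w = (al p.1 w.1, nl p.1 w.2 + r p.2 w.1 + betaAM p.1 w.1))
    (actrE : M × N → A × B → M × N)
    (hactrE : ∀ (w : M × N) (p : A × B),
      actrE w p = (ar w.1 p.1, l w.1 p.2 + nr w.2 p.1 + betaMA w.1 p.1))
    (RE : M × N → A × B)
    (hRE : ∀ w : M × N, RE w = (R w.1, S w.2 + gamma w.1)) :
    -- Â is an associative algebra
    (∀ p q s : A × B, mulE (mulE p q) s = mulE p (mulE q s)) ∧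
    -- M̂ is an Â-bimodule
    (∀ (p q : A × B) (w : M × N), actlE (mulE p q) w = actlE p (actlE q w)) ∧
    (∀ (p : A × B) (w : M × N) (q : A × B), actrE (actlE p w) q = actlE p (actrE w q)) ∧
    (∀ (w : M × N) (p q : A × B), actrE (actrE w p) q = actrE w (mulE p q)) ∧
    -- R̂ is a relative Rota-Baxter operator
    (∀ w w' : M × N, mulE (RE w) (RE w') = RE (actlE (RE w) w' + actrE w (RE w'))) ∧
    -- it is an abelian extension: the projections are a surjective morphism onto
    -- M →ᴿ A, the inclusions of B and N are injective morphisms from the trivial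
    -- relative Rota-Baxter algebra N →ˢ B, and the sequences are exact
    (∀ p q : A × B, (mulE p q).1 = mul p.1 q.1) ∧
    (∀ (p : A × B) (w : M × N), (actlE p w).1 = al p.1 w.1) ∧
    (∀ (w : M × N) (p : A × B), (actrE w p).1 = ar w.1 p.1) ∧
    (∀ w : M × N, (RE w).1 = R w.1) ∧
    (∀ b b' : B, mulE ((0 : A), b) ((0 : A), b') = 0) ∧
    (∀ n : N, RE ((0 : M), n) = ((0 : A), S n)) ∧
    Function.Injective (fun b : B => ((0 : A), b)) ∧
    Function.Injective (fun n : N => ((0 : M), n)) ∧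
    Function.Surjective (Prod.fst : A × B → A) ∧
    Function.Surjective (Prod.fst : M × N → M) ∧
    (∀ p : A × B, p.1 = 0 ↔ ∃ b : B, p = ((0 : A), b)) ∧
    (∀ w : M × N, w.1 = 0 ↔ ∃ n : N, w = ((0 : M), n)) := by
  obtain rfl : mulE = twistedMul mul bl br alpha := funext₂ hmulE
  obtain rfl : actlE = twistedActL al nl r betaAM := funext₂ hactlE
  obtain rfl : actrE = twistedActR ar nr l betaMA := funext₂ hactrE
  obtain rfl : RE = twistedOp R S gamma := funext hRE
  refine ⟨twistedMul_assoc hmul hbl hblr hbr hc1,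
    twistedActL_mul hal hnl hr1 hr2 hc4,
    twistedActR_actL_comm halr hnlr hl1 hr3 hc3,
    twistedActR_mul har hnr hl2 hl3 hc2,
    twistedOp_rotaBaxter hR hrs hsr hc5,
    fun _ _ => rfl, fun _ _ => rfl, fun _ _ => rfl, fun _ => rfl,
    fun _ _ => by simp [twistedMul], fun _ => by simp [twistedOp],
    Prod.mk_right_injective 0, Prod.mk_right_injective 0,
    Prod.fst_surjective, Prod.fst_surjective,
    fst_eq_zero_iff_exists_eq_mk, fst_eq_zero_iff_exists_eq_mk⟩
end
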